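/- arXiv:2006.06657 — 10 statements merged into one kernel-verified Lean document; each statement's English description precedes it below -/
import Mathlib

section
/- Define σ : (0, ln 2) → ℝ by σ(z) = (1 − e^{−z})·ln(e^z − 1). Then σ is super-additive: for all z_1, z_2 > 0 with z_1 + z_2 < ln 2, one has σ(z_1 + z_2) ≥ σ(z_1) + σ(z_2). -/
lemma log_exp_sub_one (z : ℝ) (hz : 0 < z) :
    Real.log (Real.exp z - 1) = Real.log (1 - Real.exp (-z)) + z := by
  have h1 : Real.exp (-z) < 1 := by
    rw [Real.exp_lt_one_iff]; linarith
  have h2 : Real.exp z - 1 = (1 - Real.exp (-z)) * Real.exp z := by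
    rw [sub_mul, one_mul, ← Real.exp_add]; simp
  rw [h2, Real.log_mul (by linarith) (Real.exp_ne_zero z), Real.log_exp]

theorem statement_5 (z₁ z₂ : ℝ) (h₁ : 0 < z₁) (h₂ : 0 < z₂)
    (h : z₁ + z₂ < Real.log 2) :
    (1 - Real.exp (-z₁)) * Real.log (Real.exp z₁ - 1) +
      (1 - Real.exp (-z₂)) * Real.log (Real.exp z₂ - 1) ≤
    (1 - Real.exp (-(z₁ + z₂))) * Real.log (Real.exp (z₁ + z₂) - 1) := by
  set a : ℝ := 1 - Real.exp (-z₁) with ha_def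
  set b : ℝ := 1 - Real.exp (-z₂) with hb_def
  set c : ℝ := 1 - Real.exp (-(z₁ + z₂)) with hc_def
  have ha0 : 0 < a := by
    have : Real.exp (-z₁) < 1 := by rw [Real.exp_lt_one_iff]; linarith
    simp [ha_def]; linarith
  have hb0 : 0 < b := by
    have : Real.exp (-z₂) < 1 := by rw [Real.exp_lt_one_iff]; linarith
    simp [hb_def]; linarith
  have hc0 : 0 < c := by
    have : Real.exp (-(z₁ + z₂)) < 1 := by rw [Real.exp_lt_one_iff]; linarith
    simp [hc_def]; linarith
  have ha1 : a < 1 := by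
    have := Real.exp_pos (-z₁); simp [ha_def]; linarith
  have hb1 : b < 1 := by
    have := Real.exp_pos (-z₂); simp [hb_def]; linarith
  have hc1 : c < 1 := by
    have := Real.exp_pos (-(z₁ + z₂)); simp only [hc_def]; linarith
  have hcab : c = a + b - a * b := by
    have : Real.exp (-(z₁ + z₂)) = Real.exp (-z₁) * Real.exp (-z₂) := by
      rw [← Real.exp_add]; ring_nf
    simp only [hc_def, ha_def, hb_def, this]; ring
  rw [log_exp_sub_one z₁ h₁, log_exp_sub_one z₂ h₂,
    log_exp_sub_one (z₁ + z₂) (by linarith)]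
  rw [← ha_def, ← hb_def, ← hc_def]
  have hca : a ≤ c := by nlinarith
  have hcb : b ≤ c := by nlinarith
  have hla : Real.log a ≤ Real.log c := Real.log_le_log ha0 hca
  have hlb : Real.log b ≤ Real.log c := Real.log_le_log hb0 hcb
  have hlc : Real.log c ≤ 0 := Real.log_nonpos (le_of_lt hc0) (le_of_lt hc1)
  nlinarith [mul_nonneg (le_of_lt ha0) (sub_nonneg.mpr hla),
    mul_nonneg (le_of_lt hb0) (sub_nonneg.mpr hlb),
    mul_nonneg (mul_nonneg ha0.le hb0.le) (neg_nonneg.mpr hlc),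
    mul_nonneg (sub_nonneg.mpr hca) h₁.le,
    mul_nonneg (sub_nonneg.mpr hcb) h₂.le]
end

section
/- Define π : ℝ^n → ℝ by π(v) = −ln( ∏_{i=1}^n (1 + e^{−v_i}) − 1 ). Then π is concave on ℝ^n. -/
open Finset

/-- Two-function Hölder inequality for finite sums. -/
lemma holder_two {ι : Type*} (s : Finset ι) (x y : ι → ℝ)
    (hx : ∀ i ∈ s, 0 ≤ x i) (hy : ∀ i ∈ s, 0 ≤ y i)
    {a b : ℝ} (ha : 0 ≤ a) (hb : 0 ≤ b) (hab : a + b = 1) :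
    ∑ i ∈ s, x i ^ a * y i ^ b ≤ (∑ i ∈ s, x i) ^ a * (∑ i ∈ s, y i) ^ b := by
  rcases ha.eq_or_lt with rfl | ha'
  · have hb1 : b = 1 := by linarith
    subst hb1; simp
  rcases hb.eq_or_lt with rfl | hb'
  · have ha1 : a = 1 := by linarith
    subst ha1; simp
  set X := ∑ i ∈ s, x i with hX
  set Y := ∑ i ∈ s, y i with hY
  have hX0 : 0 ≤ X := Finset.sum_nonneg hx
  have hY0 : 0 ≤ Y := Finset.sum_nonneg hy
  rcases hX0.eq_or_lt with hX0' | hXpos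
  · have hall : ∀ i ∈ s, x i = 0 :=
      (Finset.sum_eq_zero_iff_of_nonneg hx).1 hX0'.symm
    have : ∑ i ∈ s, x i ^ a * y i ^ b = 0 := by
      apply Finset.sum_eq_zero
      intro i hi
      rw [hall i hi, Real.zero_rpow ha'.ne', zero_mul]
    rw [this, ← hX0', Real.zero_rpow ha'.ne', zero_mul]
  rcases hY0.eq_or_lt with hY0' | hYpos
  · have hall : ∀ i ∈ s, y i = 0 :=
      (Finset.sum_eq_zero_iff_of_nonneg hy).1 hY0'.symm
    have : ∑ i ∈ s, x i ^ a * y i ^ b = 0 := by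
      apply Finset.sum_eq_zero
      intro i hi
      rw [hall i hi, Real.zero_rpow hb'.ne', mul_zero]
    rw [this, ← hY0', Real.zero_rpow hb'.ne', mul_zero]
  have hXa : (0:ℝ) < X ^ a := Real.rpow_pos_of_pos hXpos a
  have hYb : (0:ℝ) < Y ^ b := Real.rpow_pos_of_pos hYpos b
  have step : ∀ i ∈ s, x i ^ a * y i ^ b ≤
      (a * (x i / X) + b * (y i / Y)) * (X ^ a * Y ^ b) := by
    intro i hi
    have h1 : x i ^ a * y i ^ b = ((x i / X) ^ a * (y i / Y) ^ b) * (X ^ a * Y ^ b) := by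
      rw [Real.div_rpow (hx i hi) hXpos.le, Real.div_rpow (hy i hi) hYpos.le]
      field_simp
    rw [h1]
    have h2 : (x i / X) ^ a * (y i / Y) ^ b ≤ a * (x i / X) + b * (y i / Y) :=
      Real.geom_mean_le_arith_mean2_weighted ha hb
        (div_nonneg (hx i hi) hXpos.le) (div_nonneg (hy i hi) hYpos.le) hab
    exact mul_le_mul_of_nonneg_right h2 (by positivity)
  calc ∑ i ∈ s, x i ^ a * y i ^ b
      ≤ ∑ i ∈ s, (a * (x i / X) + b * (y i / Y)) * (X ^ a * Y ^ b) :=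
        Finset.sum_le_sum step
    _ = (a * (X / X) + b * (Y / Y)) * (X ^ a * Y ^ b) := by
        rw [← Finset.sum_mul]
        congr 1
        rw [Finset.sum_add_distrib, ← Finset.mul_sum, ← Finset.mul_sum,
          ← Finset.sum_div, ← Finset.sum_div]
    _ = X ^ a * Y ^ b := by
        rw [div_self hXpos.ne', div_self hYpos.ne', mul_one, mul_one, hab, one_mul]

theorem statement_6 (n : ℕ) :
    ConcaveOn ℝ Set.univ
      (fun v : EuclideanSpace ℝ (Fin n) =>
        -Real.log (∏ i, (1 + Real.exp (-(v i))) - 1)) := by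
  rcases Nat.eq_zero_or_pos n with rfl | hn
  · have : (fun v : EuclideanSpace ℝ (Fin 0) =>
        -Real.log (∏ i, (1 + Real.exp (-(v i))) - 1)) = fun _ => (0:ℝ) := by
      funext v; simp
    rw [this]
    exact concaveOn_const 0 convex_univ
  haveI : Nonempty (Fin n) := ⟨⟨0, hn⟩⟩
  set S := (Finset.univ : Finset (Finset (Fin n))).erase Finset.univ with hS
  have key : ∀ v : EuclideanSpace ℝ (Fin n),
      ∏ i, (1 + Real.exp (-(v i))) - 1 = ∑ t ∈ S, Real.exp (∑ i ∈ tᶜ, -(v i)) := by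
    intro v
    have h1 : ∏ i, (1 + Real.exp (-(v i))) =
        ∑ t : Finset (Fin n), Real.exp (∑ i ∈ tᶜ, -(v i)) := by
      rw [Fintype.prod_add (fun _ => (1:ℝ)) (fun i => Real.exp (-(v i)))]
      refine Finset.sum_congr rfl fun t _ => ?_
      rw [Finset.prod_const_one, one_mul, Real.exp_sum]
    have h2 : ∑ t ∈ S, Real.exp (∑ i ∈ tᶜ, -(v i)) +
        Real.exp (∑ i ∈ (Finset.univ : Finset (Fin n))ᶜ, -(v i)) =
        ∑ t : Finset (Fin n), Real.exp (∑ i ∈ tᶜ, -(v i)) :=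
      Finset.sum_erase_add _ _ (Finset.mem_univ _)
    have h3 : Real.exp (∑ i ∈ (Finset.univ : Finset (Fin n))ᶜ, -(v i)) = 1 := by
      simp
    rw [h1, ← h2, h3]; ring
  have hmemS : ∅ ∈ S := by
    rw [hS, Finset.mem_erase]
    exact ⟨(Finset.univ_nonempty.ne_empty).symm, Finset.mem_univ _⟩
  have pos : ∀ v : EuclideanSpace ℝ (Fin n),
      0 < ∑ t ∈ S, Real.exp (∑ i ∈ tᶜ, -(v i)) :=
    fun v => Finset.sum_pos (fun t _ => Real.exp_pos _) ⟨∅, hmemS⟩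
  refine ⟨convex_univ, fun x _ y _ a b ha hb hab => ?_⟩
  simp only [smul_eq_mul, key]
  set Fx := ∑ t ∈ S, Real.exp (∑ i ∈ tᶜ, -(x i)) with hFx
  set Fy := ∑ t ∈ S, Real.exp (∑ i ∈ tᶜ, -(y i)) with hFy
  have hFxpos : 0 < Fx := pos x
  have hFypos : 0 < Fy := pos y
  have hz : ∀ t : Finset (Fin n),
      Real.exp (∑ i ∈ tᶜ, -((a • x + b • y) i)) =
        Real.exp (∑ i ∈ tᶜ, -(x i)) ^ a * Real.exp (∑ i ∈ tᶜ, -(y i)) ^ b := by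
    intro t
    have : ∑ i ∈ tᶜ, -((a • x + b • y) i) =
        (∑ i ∈ tᶜ, -(x i)) * a + (∑ i ∈ tᶜ, -(y i)) * b := by
      rw [Finset.sum_mul, Finset.sum_mul, ← Finset.sum_add_distrib]
      refine Finset.sum_congr rfl fun i _ => ?_
      simp [PiLp.add_apply, PiLp.smul_apply, smul_eq_mul]
      ring
    rw [this, Real.exp_add, Real.exp_mul, Real.exp_mul]
  have hholder : ∑ t ∈ S, Real.exp (∑ i ∈ tᶜ, -((a • x + b • y) i)) ≤ Fx ^ a * Fy ^ b := by
    calc ∑ t ∈ S, Real.exp (∑ i ∈ tᶜ, -((a • x + b • y) i))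
        = ∑ t ∈ S, Real.exp (∑ i ∈ tᶜ, -(x i)) ^ a * Real.exp (∑ i ∈ tᶜ, -(y i)) ^ b :=
          Finset.sum_congr rfl fun t _ => hz t
      _ ≤ Fx ^ a * Fy ^ b :=
          holder_two S _ _ (fun t _ => (Real.exp_pos _).le) (fun t _ => (Real.exp_pos _).le)
            ha hb hab
  have hlog : Real.log (∑ t ∈ S, Real.exp (∑ i ∈ tᶜ, -((a • x + b • y) i))) ≤
      a * Real.log Fx + b * Real.log Fy := by
    calc Real.log (∑ t ∈ S, Real.exp (∑ i ∈ tᶜ, -((a • x + b • y) i)))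
        ≤ Real.log (Fx ^ a * Fy ^ b) :=
          Real.log_le_log (pos _) hholder
      _ = a * Real.log Fx + b * Real.log Fy := by
          rw [Real.log_mul (Real.rpow_pos_of_pos hFxpos a).ne'
            (Real.rpow_pos_of_pos hFypos b).ne', Real.log_rpow hFxpos,
            Real.log_rpow hFypos]
  linarith
end

section
/- Let ℓ(z) = ln(1+e^{−z}) be the logistic loss, so ℓ'(z) = −1/(1+e^z) and ℓ''(z) = e^z/(1+e^z)². Then for every v ∈ ℝ^n and every z ∈ ℝ^n, with S(v) = Σ_{i=1}^n ℓ(v_i), one has (e^{S(v)} − 1) · Σ_{i=1}^n ℓ''(v_i) z_i² ≥ ( Σ_{i=1}^n ℓ'(v_i) z_i )². -/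
/-!
Since `ℓ'(x)² = e^{-x} ℓ''(x)`, Cauchy–Schwarz weighted by `ℓ''(vᵢ)` bounds the left-hand side by
`(∑ e^{-vᵢ}) · ∑ ℓ''(vᵢ) zᵢ²`, and `1 + ∑ e^{-vᵢ} ≤ ∏ (1 + e^{-vᵢ}) = e^{S(v)}`.
-/

open Finset Real

theorem Finset.one_add_sum_le_prod_one_add {ι R : Type*} [CommSemiring R] [PartialOrder R]
    [IsOrderedRing R] (s : Finset ι) {f : ι → R} (hf : ∀ i ∈ s, 0 ≤ f i) :
    1 + ∑ i ∈ s, f i ≤ ∏ i ∈ s, (1 + f i) := by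
  classical
  induction s using Finset.induction_on with
  | empty => simp
  | insert a s ha ih =>
    have ih := ih fun i hi => hf i (mem_insert_of_mem hi)
    have hfa : 0 ≤ f a := hf a (mem_insert_self a s)
    have one_le_prod : 1 ≤ ∏ i ∈ s, (1 + f i) :=
      le_trans (le_add_of_nonneg_right (sum_nonneg fun i hi => hf i (mem_insert_of_mem hi))) ih
    rw [sum_insert ha, prod_insert ha, add_mul, one_mul, add_left_comm, add_comm (f a)]
    exact add_le_add ih (le_mul_of_one_le_right hfa one_le_prod)

theorem sq_one_div_one_add_exp (x : ℝ) :
    (1 / (1 + exp x)) ^ 2 = exp (-x) * (exp x / (1 + exp x) ^ 2) := by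
  rw [exp_neg]
  field_simp

theorem exp_sum_log_one_add_exp_neg {ι : Type*} (s : Finset ι) (v : ι → ℝ) :
    exp (∑ i ∈ s, log (1 + exp (-v i))) = ∏ i ∈ s, (1 + exp (-v i)) := by
  rw [exp_sum]
  exact prod_congr rfl fun i _ => exp_log (by positivity)

theorem statement_7 (n : ℕ) (v z : Fin n → ℝ) :
    (∑ i, (-(1 / (1 + Real.exp (v i)))) * z i) ^ 2 ≤
    (Real.exp (∑ i, Real.log (1 + Real.exp (-(v i)))) - 1) *
      ∑ i, (Real.exp (v i) / (1 + Real.exp (v i)) ^ 2) * z i ^ 2 := by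
  have sum_exp_neg_le : ∑ i, exp (-v i) ≤ exp (∑ i, log (1 + exp (-v i))) - 1 := by
    rw [exp_sum_log_one_add_exp_neg, le_sub_iff_add_le']
    exact one_add_sum_le_prod_one_add _ fun i _ => (exp_pos _).le
  calc (∑ i, (-(1 / (1 + exp (v i)))) * z i) ^ 2
      ≤ (∑ i, exp (-v i)) * ∑ i, (exp (v i) / (1 + exp (v i)) ^ 2) * z i ^ 2 :=
        sum_sq_le_sum_mul_sum_of_sq_le_mul _ (fun i _ => (exp_pos _).le)
          (fun i _ => by positivity) fun i _ => by
            rw [mul_pow, neg_sq, sq_one_div_one_add_exp, mul_assoc]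
    _ ≤ _ := by gcongr
end

section
/- Let v ∈ ℝ^n satisfy Σ_{i=1}^n e^{−v_i} < 1. Define α = −ln( Σ_{i=1}^n e^{−v_i} ) and β = ( Σ_{i=1}^n e^{−v_i} v_i ) / ( Σ_{i=1}^n e^{−v_i} ). Then 0 < α ≤ β ≤ α + ln n. -/
lemma aux_log_ineq (a c : ℝ) (ha : 0 < a) (hc : 0 < c) :
    a * (Real.log c - Real.log a) ≤ c - a := by
  have hx : 0 < c / a := div_pos hc ha
  have h1 : Real.log (c / a) ≤ c / a - 1 := Real.log_le_sub_one_of_pos hx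
  rw [Real.log_div (ne_of_gt hc) (ne_of_gt ha)] at h1
  have h2 : a * (Real.log c - Real.log a) ≤ a * (c / a - 1) :=
    mul_le_mul_of_nonneg_left h1 ha.le
  have h3 : a * (c / a - 1) = c - a := by field_simp
  linarith

theorem statement_8 (n : ℕ) (hn : 0 < n) (v : Fin n → ℝ)
    (h : ∑ i, Real.exp (-(v i)) < 1) :
    0 < -Real.log (∑ i, Real.exp (-(v i))) ∧
    -Real.log (∑ i, Real.exp (-(v i))) ≤
      (∑ i, Real.exp (-(v i)) * v i) / (∑ i, Real.exp (-(v i))) ∧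
    (∑ i, Real.exp (-(v i)) * v i) / (∑ i, Real.exp (-(v i))) ≤
      -Real.log (∑ i, Real.exp (-(v i))) + Real.log n := by
  set S := ∑ i, Real.exp (-(v i)) with hSdef
  have hS : 0 < S := by
    apply Finset.sum_pos (fun i _ => Real.exp_pos _)
    exact Finset.univ_nonempty_iff.mpr ⟨⟨0, hn⟩⟩
  have hlog : Real.log S < 0 := Real.log_neg hS h
  refine ⟨by linarith, ?_, ?_⟩
  · -- lower bound
    rw [le_div_iff₀ hS]
    have hterm : ∀ i ∈ Finset.univ, Real.exp (-(v i)) * (-Real.log S) ≤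
        Real.exp (-(v i)) * v i := by
      intro i _
      have hle : Real.exp (-(v i)) ≤ S :=
        Finset.single_le_sum (f := fun j => Real.exp (-(v j))) (fun j _ => (Real.exp_pos _).le) (Finset.mem_univ i)
      have : Real.log (Real.exp (-(v i))) ≤ Real.log S :=
        Real.log_le_log (Real.exp_pos _) hle
      rw [Real.log_exp] at this
      have : -Real.log S ≤ v i := by linarith
      exact mul_le_mul_of_nonneg_left this (Real.exp_pos _).le
    calc -Real.log S * S = ∑ i, Real.exp (-(v i)) * (-Real.log S) := by
          rw [← Finset.sum_mul]; ring
      _ ≤ ∑ i, Real.exp (-(v i)) * v i := Finset.sum_le_sum hterm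
  · -- upper bound
    rw [div_le_iff₀ hS]
    have hn' : (0:ℝ) < n := Nat.cast_pos.mpr hn
    have hc : 0 < S / n := div_pos hS hn'
    have hterm : ∀ i ∈ Finset.univ, Real.exp (-(v i)) * v i ≤
        S / n - Real.exp (-(v i)) + Real.exp (-(v i)) * (Real.log n - Real.log S)
          + Real.exp (-(v i)) * Real.log S + Real.exp (-(v i)) * (-Real.log S) := by
      intro i _
      have := aux_log_ineq (Real.exp (-(v i))) (S / n) (Real.exp_pos _) hc
      rw [Real.log_div (ne_of_gt hS) (ne_of_gt hn'), Real.log_exp] at this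
      nlinarith [Real.exp_pos (-(v i))]
    have hsum := Finset.sum_le_sum hterm
    have hconst : ∑ _i : Fin n, S / n = S := by
      rw [Finset.sum_const, Finset.card_univ, Fintype.card_fin, nsmul_eq_mul]
      field_simp
    simp only [Finset.sum_add_distrib, Finset.sum_sub_distrib, ← Finset.sum_mul,
      hconst] at hsum
    nlinarith [hsum]
end

section
/- Let v ∈ ℝ^n satisfy S := Σ_{i=1}^n ln(1+e^{−v_i}) < ln 2. Define α = −ln(e^S − 1) and β = ( Σ_{i=1}^n v_i/(1+e^{v_i}) ) / (1 − e^{−S}). Then 0 < α ≤ β ≤ α + 2 ln n + 1. -/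
/-!
Put `bᵢ = σ(-vᵢ) = 1/(1 + e^{vᵢ})`, `B = 1 - e^{-S}` and `T = ∑ bᵢ`. Then `e^{-S} = ∏ (1 - bᵢ)`,
`σ(-α) = B`, and the numerator of `β` is `∑ bᵢ vᵢ`. Since `∏ (1 - bⱼ) ≤ 1 - bᵢ`, every `bᵢ ≤ B`,
i.e. `vᵢ ≥ α`; with `B ≤ T` (Weierstrass product inequality) this gives `α B ≤ ∑ bᵢ vᵢ`.
For the upper bound, `bᵢ vᵢ ≤ -bᵢ log bᵢ`, Jensen for the entropy gives
`∑ -bᵢ log bᵢ ≤ T log n - T log T`, and `B ≤ T ≤ S ≤ e^S - 1 = B / (1 - B) ≤ 2 B` turns this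
into `B (α + 2 log n + 1)`.
-/

open Real Finset

section

variable {ι : Type*} (s : Finset ι) {b : ι → ℝ}

theorem Finset.one_sub_sum_le_prod_one_sub (h0 : ∀ i ∈ s, 0 ≤ b i) (h1 : ∀ i ∈ s, b i ≤ 1) :
    1 - ∑ i ∈ s, b i ≤ ∏ i ∈ s, (1 - b i) := by
  classical
  induction s using Finset.cons_induction with
  | empty => simp
  | cons a s ha ih =>
    rw [sum_cons, prod_cons]
    have ha0 := h0 a (mem_cons_self a s)
    have ha1 := h1 a (mem_cons_self a s)
    have hs0 : 0 ≤ ∑ i ∈ s, b i := sum_nonneg fun i hi ↦ h0 i (mem_cons_of_mem hi)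
    have ih := ih (fun i hi ↦ h0 i (mem_cons_of_mem hi)) (fun i hi ↦ h1 i (mem_cons_of_mem hi))
    nlinarith [mul_le_mul_of_nonneg_left ih (sub_nonneg.2 ha1)]

theorem Finset.prod_one_sub_le_one_sub (h0 : ∀ i ∈ s, 0 ≤ b i) (h1 : ∀ i ∈ s, b i ≤ 1)
    {i : ι} (hi : i ∈ s) : ∏ j ∈ s, (1 - b j) ≤ 1 - b i := by
  classical
  rw [← mul_prod_erase s _ hi]
  refine mul_le_of_le_one_right (sub_nonneg.2 (h1 i hi)) (prod_le_one ?_ ?_)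
  · exact fun j hj ↦ sub_nonneg.2 (h1 j (mem_of_mem_erase hj))
  · exact fun j hj ↦ sub_le_self _ (h0 j (mem_of_mem_erase hj))

theorem Finset.prod_one_sub_le_exp_neg_sum (h1 : ∀ i ∈ s, b i ≤ 1) :
    ∏ i ∈ s, (1 - b i) ≤ exp (-∑ i ∈ s, b i) := by
  rw [← sum_neg_distrib, exp_sum]
  exact prod_le_prod (fun i hi ↦ sub_nonneg.2 (h1 i hi)) fun i _ ↦ one_sub_le_exp_neg (b i)

theorem Real.sum_negMulLog_le (h0 : ∀ i ∈ s, 0 ≤ b i) :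
    ∑ i ∈ s, negMulLog (b i) ≤ (∑ i ∈ s, b i) * log #s + negMulLog (∑ i ∈ s, b i) := by
  rcases s.eq_empty_or_nonempty with rfl | hs
  · simp
  have hcard : (0 : ℝ) < #s := by exact_mod_cast hs.card_pos
  have hjensen := concaveOn_negMulLog.le_map_sum (t := s) (w := fun _ ↦ (#s : ℝ)⁻¹) (p := b)
    (fun _ _ ↦ by positivity) (by simp [hcard.ne']) fun i hi ↦ Set.mem_Ici.2 (h0 i hi)
  simp only [smul_eq_mul, ← mul_sum, mul_comm _ (∑ i ∈ s, b i), negMulLog_mul] at hjensen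
  have hinv : negMulLog (#s : ℝ)⁻¹ = (#s : ℝ)⁻¹ * log #s := by simp [negMulLog, log_inv]
  rw [hinv, ← mul_assoc, mul_comm _ (#s : ℝ)⁻¹, mul_assoc, ← mul_add, add_comm] at hjensen
  exact le_of_mul_le_mul_left hjensen (inv_pos.2 hcard)

end

theorem Real.mul_exp_neg_le_one_sub_exp_neg (S : ℝ) : S * exp (-S) ≤ 1 - exp (-S) := by
  have := mul_le_mul_of_nonneg_right (add_one_le_exp S) (exp_pos (-S)).le
  rw [← exp_add, add_neg_cancel, exp_zero] at this
  linarith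

theorem Real.neg_log_exp_sub_one {S : ℝ} (hS : 0 < S) :
    -log (exp S - 1) = -log (1 - exp (-S)) - S := by
  have h : 0 < 1 - exp (-S) := sub_pos.2 (exp_lt_one_iff.2 (neg_lt_zero.2 hS))
  rw [show exp S - 1 = exp S * (1 - exp (-S)) by rw [mul_sub, ← exp_add]; simp,
    log_mul (exp_pos S).ne' h.ne', log_exp]
  ring

theorem Real.sigmoid_log_exp_sub_one {S : ℝ} (hS : 0 < S) :
    sigmoid (log (exp S - 1)) = 1 - exp (-S) := by
  have h : 0 < exp S - 1 := by linarith [add_one_lt_exp hS.ne']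
  rw [sigmoid_def, exp_neg, exp_log h, exp_neg]
  field_simp
  ring

theorem Real.div_one_add_exp (v : ℝ) : v / (1 + exp v) = sigmoid (-v) * v := by
  rw [sigmoid_def, neg_neg, div_eq_inv_mul]

theorem Real.sigmoid_neg_mul_le_negMulLog (v : ℝ) :
    sigmoid (-v) * v ≤ negMulLog (sigmoid (-v)) := by
  have hlog : log (sigmoid (-v)) = log (sigmoid v) - v := by
    rw [← sigmoid_mul_rexp_neg, log_mul (sigmoid_pos v).ne' (exp_pos _).ne', log_exp,
      sub_eq_add_neg]
  have hneg : log (sigmoid v) ≤ 0 := log_nonpos (sigmoid_nonneg v) (sigmoid_le_one v)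
  rw [negMulLog, hlog]
  nlinarith [sigmoid_pos (-v)]

theorem Real.exp_neg_sum_log_one_add_exp_neg {ι : Type*} (s : Finset ι) (v : ι → ℝ) :
    exp (-∑ i ∈ s, log (1 + exp (-v i))) = ∏ i ∈ s, (1 - sigmoid (-v i)) := by
  rw [← sum_neg_distrib, exp_sum]
  refine prod_congr rfl fun i _ ↦ ?_
  rw [exp_neg, exp_log (by positivity), sigmoid_neg, sub_sub_cancel, sigmoid_def]

theorem mul_log_add_negMulLog_le {B T S x : ℝ} (hB0 : 0 < B) (hB : B ≤ 1 / 2) (hBT : B ≤ T)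
    (hTS : T ≤ S) (hS : S * (1 - B) ≤ B) (hx : 0 ≤ log x) :
    T * log x + negMulLog T ≤ B * (-log B - S + 2 * log x + 1) := by
  have hT0 : 0 < T := hB0.trans_le hBT
  have hT2B : T ≤ 2 * B := by nlinarith
  -- the tangent line of `negMulLog` at `B`
  have htangent : negMulLog T ≤ -T * log B + B - T := by
    have := mul_le_mul_of_nonneg_left (log_le_sub_one_of_pos (div_pos hB0 hT0)) hT0.le
    rw [log_div hB0.ne' hT0.ne'] at this
    rw [negMulLog]
    field_simp at this
    linarith
  have hlogB : B * -log B ≤ 1 - B := by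
    have := log_le_sub_one_of_pos (inv_pos.2 hB0)
    rw [log_inv] at this
    nlinarith [mul_inv_cancel₀ hB0.ne']
  have hrest : (T - B) * -log B - T + B * S ≤ 0 := by
    refine nonpos_of_mul_nonpos_right ?_ hB0
    nlinarith [mul_le_mul_of_nonneg_left hlogB (sub_nonneg.2 hBT)]
  nlinarith [mul_le_mul_of_nonneg_right hT2B hx]

section LogisticMargin

variable {ι : Type*} (s : Finset ι) (v : ι → ℝ) {S : ℝ}

theorem smoothedMargin_mul_le_sum (hS0 : 0 < S)
    (hprod : exp (-S) = ∏ i ∈ s, (1 - sigmoid (-v i))) (hα : 0 ≤ -log (exp S - 1)) :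
    -log (exp S - 1) * (1 - exp (-S)) ≤ ∑ i ∈ s, sigmoid (-v i) * v i := by
  have hb0 : ∀ i ∈ s, 0 ≤ sigmoid (-v i) := fun i _ ↦ sigmoid_nonneg _
  have hb1 : ∀ i ∈ s, sigmoid (-v i) ≤ 1 := fun i _ ↦ sigmoid_le_one _
  have hv : ∀ i ∈ s, -log (exp S - 1) ≤ v i := fun i hi ↦ by
    have := prod_one_sub_le_one_sub s hb0 hb1 hi
    rw [← hprod, le_sub_comm, ← sigmoid_log_exp_sub_one hS0, ← neg_neg (log _),
      sigmoid_le_iff] at this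
    linarith
  calc -log (exp S - 1) * (1 - exp (-S))
      ≤ -log (exp S - 1) * ∑ i ∈ s, sigmoid (-v i) := by
        gcongr
        linarith [hprod ▸ one_sub_sum_le_prod_one_sub s hb0 hb1]
    _ = ∑ i ∈ s, sigmoid (-v i) * -log (exp S - 1) := by rw [mul_comm, sum_mul]
    _ ≤ ∑ i ∈ s, sigmoid (-v i) * v i := sum_le_sum fun i hi ↦ mul_le_mul_of_nonneg_left (hv i hi) (hb0 i hi)

theorem sum_le_smoothedMargin_add_mul (hS0 : 0 < S)
    (hprod : exp (-S) = ∏ i ∈ s, (1 - sigmoid (-v i))) (hα : 0 ≤ -log (exp S - 1)) :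
    ∑ i ∈ s, sigmoid (-v i) * v i ≤
      (-log (exp S - 1) + 2 * log #s + 1) * (1 - exp (-S)) := by
  have hb0 : ∀ i ∈ s, 0 ≤ sigmoid (-v i) := fun i _ ↦ sigmoid_nonneg _
  have hb1 : ∀ i ∈ s, sigmoid (-v i) ≤ 1 := fun i _ ↦ sigmoid_le_one _
  have hB0 : 0 < 1 - exp (-S) := sub_pos.2 (exp_lt_one_iff.2 (neg_lt_zero.2 hS0))
  have hB2 : 1 - exp (-S) ≤ 1 / 2 := by
    rwa [← sigmoid_log_exp_sub_one hS0, one_div, ← sigmoid_zero, sigmoid_le_iff, ← neg_nonneg]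
  have hBT : 1 - exp (-S) ≤ ∑ i ∈ s, sigmoid (-v i) := by
    linarith [hprod ▸ one_sub_sum_le_prod_one_sub s hb0 hb1]
  have hTS : ∑ i ∈ s, sigmoid (-v i) ≤ S := by
    have := prod_one_sub_le_exp_neg_sum s hb1
    rwa [← hprod, exp_le_exp, neg_le_neg_iff] at this
  have hSB : S * (1 - (1 - exp (-S))) ≤ 1 - exp (-S) := by
    simpa only [sub_sub_cancel] using mul_exp_neg_le_one_sub_exp_neg S
  calc ∑ i ∈ s, sigmoid (-v i) * v i
      ≤ ∑ i ∈ s, negMulLog (sigmoid (-v i)) :=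
        sum_le_sum fun i _ ↦ sigmoid_neg_mul_le_negMulLog _
    _ ≤ (∑ i ∈ s, sigmoid (-v i)) * log #s + negMulLog (∑ i ∈ s, sigmoid (-v i)) :=
        sum_negMulLog_le s hb0
    _ ≤ (1 - exp (-S)) * (-log (1 - exp (-S)) - S + 2 * log #s + 1) :=
        mul_log_add_negMulLog_le hB0 hB2 hBT hTS hSB (log_natCast_nonneg _)
    _ = (-log (exp S - 1) + 2 * log #s + 1) * (1 - exp (-S)) := by
        rw [neg_log_exp_sub_one hS0]; ring

end LogisticMargin

theorem statement_9 (n : ℕ) (hn : 0 < n) (v : Fin n → ℝ)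
    (h : ∑ i, Real.log (1 + Real.exp (-(v i))) < Real.log 2) :
    0 < -Real.log (Real.exp (∑ i, Real.log (1 + Real.exp (-(v i)))) - 1) ∧
    -Real.log (Real.exp (∑ i, Real.log (1 + Real.exp (-(v i)))) - 1) ≤
      (∑ i, v i / (1 + Real.exp (v i))) /
        (1 - Real.exp (-(∑ i, Real.log (1 + Real.exp (-(v i)))))) ∧
    (∑ i, v i / (1 + Real.exp (v i))) /
        (1 - Real.exp (-(∑ i, Real.log (1 + Real.exp (-(v i)))))) ≤
      -Real.log (Real.exp (∑ i, Real.log (1 + Real.exp (-(v i)))) - 1) +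
        2 * Real.log n + 1 := by
  have : Nonempty (Fin n) := Fin.pos_iff_nonempty.mp hn
  set S := ∑ i, log (1 + exp (-v i))
  have hS0 : 0 < S :=
    sum_pos (fun i _ ↦ log_pos (by simpa using exp_pos (-v i))) univ_nonempty
  have hprod := exp_neg_sum_log_one_add_exp_neg univ v
  have hB0 : 0 < 1 - exp (-S) := sub_pos.2 (exp_lt_one_iff.2 (neg_lt_zero.2 hS0))
  have hα : 0 < -log (exp S - 1) := by
    have hexp : exp S < 2 := by simpa [exp_log two_pos] using exp_lt_exp.2 h
    exact neg_pos.2 (log_neg (by linarith [add_one_lt_exp hS0.ne']) (by linarith))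
  simp only [div_one_add_exp]
  refine ⟨hα, (le_div_iff₀ hB0).2 ?_, (div_le_iff₀ hB0).2 ?_⟩
  · exact smoothedMargin_mul_le_sum univ v hS0 hprod hα.le
  · simpa using sum_le_smoothedMargin_add_mul univ v hS0 hprod hα.le
end

section
/- Let v ∈ ℝ^n satisfy S := Σ_{i=1}^n ln(1+e^{−v_i}) < ln 2. Then Σ_{i=1}^n 1/(1+e^{v_i}) ≤ 2(1 − e^{−S}). -/
theorem statement_10 (n : ℕ) (v : Fin n → ℝ)
    (h : ∑ i, Real.log (1 + Real.exp (-(v i))) < Real.log 2) :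
    ∑ i, 1 / (1 + Real.exp (v i)) ≤
      2 * (1 - Real.exp (-(∑ i, Real.log (1 + Real.exp (-(v i)))))) := by
  set S := ∑ i, Real.log (1 + Real.exp (-(v i))) with hSdef
  have hS0 : 0 ≤ S := Finset.sum_nonneg fun i _ =>
    Real.log_nonneg (by nlinarith [Real.exp_pos (-(v i))])
  have hstep1 : ∑ i, 1 / (1 + Real.exp (v i)) ≤ S := by
    apply Finset.sum_le_sum
    intro i _
    have hp : (0:ℝ) < 1 + Real.exp (-(v i)) := by positivity
    have h1 : Real.log (1 + Real.exp (-(v i)))⁻¹ ≤ (1 + Real.exp (-(v i)))⁻¹ - 1 :=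
      Real.log_le_sub_one_of_pos (by positivity)
    rw [Real.log_inv] at h1
    have h2 : 1 / (1 + Real.exp (v i)) = 1 - (1 + Real.exp (-(v i)))⁻¹ := by
      have he : Real.exp (v i) * Real.exp (-(v i)) = 1 := by
        rw [← Real.exp_add]; simp
      have hq : (0:ℝ) < 1 + Real.exp (v i) := by positivity
      field_simp
      nlinarith [Real.exp_pos (v i), Real.exp_pos (-(v i))]
    linarith
  have hS1 : S < 1 := lt_trans h (by
    have := Real.log_two_lt_d9
    linarith)
  have hexp : Real.exp (-S) ≤ 1 / (1 + S) := by
    have h1 : S + 1 ≤ Real.exp S := Real.add_one_le_exp S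
    have h2 : Real.exp (-S) = 1 / Real.exp S := by
      rw [Real.exp_neg]; ring
    rw [h2]
    apply div_le_div_of_nonneg_left (by norm_num) (by linarith) (by linarith)
  have hstep2 : S ≤ 2 * (1 - Real.exp (-S)) := by
    have h1S : (0:ℝ) < 1 + S := by linarith
    rw [le_div_iff₀ h1S] at hexp
    nlinarith [Real.exp_pos (-S), hexp, mul_nonneg hS0 (sub_nonneg.mpr hS1.le)]
  linarith
end

section
/- Let p_1,…,p_n : ℝ^k → ℝ be L-positively homogeneous (L > 0), differentiable at every nonzero point with locally Lipschitz gradients on ℝ^k \ {0}, let ℓ be the exponential or logistic loss, and let 𝓛(W) = Σ_i ℓ(p_i(W)). For W with 𝓛(W) < ℓ(0) (such W are nonzero), set α(W) = ℓ^{−1}(𝓛(W)) and β(W) = ⟨W, ∇α(W)⟩/L. Then there exists a constant C > 0 such that for every W with 𝓛(W) < ℓ(0): β(W) ≤ C‖W‖^L and ‖∇α(W)‖ ≤ C‖W‖^{L−1}. -/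
open scoped RealInnerProductSpace

/-!
For both losses `ℓ' = -φ ∘ ℓ` with `φ` positive and increasing on `(0, ∞)` (`φ y = y`, resp.
`φ y = 1 - e^{-y}`), so the inverse `g` of `ℓ` has `g' = -1/φ`. By the chain rule
`∇α = ∑ i, (φ (ℓ (p i)) / φ 𝓛) • ∇p i`, and each weight is at most `1` since `ℓ (p i) ≤ 𝓛`;
hence `‖∇α‖ ≤ ∑ i, ‖∇p i‖`. Homogeneity gives `∇p i (c • W) = c ^ (L - 1) • ∇p i W`, so
`‖∇p i W‖ ≤ B i * ‖W‖ ^ (L - 1)` with `B i` a bound of the continuous `∇p i` on the unit sphere,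
and Cauchy–Schwarz turns this into the bound on `β`. Finally `W ≠ 0`, because `p i 0 = 0`
makes `𝓛 0 = n ℓ(0)`.
-/

open Real Set Filter Topology InnerProductSpace Finset

structure IsInvertibleLoss (ℓ g φ : ℝ → ℝ) : Prop where
  pos : ∀ z, 0 < ℓ z
  left_inv : Function.LeftInverse g ℓ
  right_inv : ∀ y, 0 < y → ℓ (g y) = y
  continuousOn_inv : ContinuousOn g (Ioi 0)
  hasDerivAt : ∀ z, HasDerivAt ℓ (-φ (ℓ z)) z
  rate_pos : ∀ y, 0 < y → 0 < φ y
  rate_mono : MonotoneOn φ (Ioi 0)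

namespace IsInvertibleLoss

variable {ℓ g φ : ℝ → ℝ}

theorem hasDerivAt_inv (h : IsInvertibleLoss ℓ g φ) {y : ℝ} (hy : 0 < y) :
    HasDerivAt g (-(φ y)⁻¹) y := by
  have hℓ := h.hasDerivAt (g y)
  rw [h.right_inv y hy] at hℓ
  rw [← inv_neg]
  exact hℓ.of_local_left_inverse (h.continuousOn_inv.continuousAt (Ioi_mem_nhds hy))
    (neg_ne_zero.2 (h.rate_pos y hy).ne') (eventually_of_mem (Ioi_mem_nhds hy) h.right_inv)

theorem invFun_eq (h : IsInvertibleLoss ℓ g φ) {y : ℝ} (hy : 0 < y) :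
    Function.invFun ℓ y = g y :=
  h.left_inv.injective <| by rw [Function.invFun_eq ⟨g y, h.right_inv y hy⟩, h.right_inv y hy]

theorem norm_fderiv_invFun_sum_le {E ι : Type*} [NormedAddCommGroup E] [NormedSpace ℝ E]
    [Fintype ι] [Nonempty ι] (h : IsInvertibleLoss ℓ g φ) {p : ι → E → ℝ} {x : E}
    (hp : ∀ i, DifferentiableAt ℝ (p i) x) :
    ‖fderiv ℝ (fun y => Function.invFun ℓ (∑ i, ℓ (p i y))) x‖ ≤ ∑ i, ‖fderiv ℝ (p i) x‖ := by
  set S : E → ℝ := fun y => ∑ i, ℓ (p i y)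
  have hS_pos : ∀ y, 0 < S y := fun y => sum_pos (fun i _ => h.pos _) univ_nonempty
  have hS : HasFDerivAt S (∑ i, (-φ (ℓ (p i x))) • fderiv ℝ (p i) x) x :=
    HasFDerivAt.fun_sum fun i _ => (h.hasDerivAt _).comp_hasFDerivAt x (hp i).hasFDerivAt
  have hcomp : (fun y => Function.invFun ℓ (S y)) = g ∘ S :=
    funext fun y => h.invFun_eq (hS_pos y)
  have hφS : 0 < φ (S x) := h.rate_pos _ (hS_pos x)
  have hle : ∀ i, φ (ℓ (p i x)) ≤ φ (S x) :=
    fun i => h.rate_mono (h.pos _) (hS_pos x)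
      (single_le_sum (fun j _ => (h.pos (p j x)).le) (mem_univ i))
  rw [hcomp, ((h.hasDerivAt_inv (hS_pos x)).comp_hasFDerivAt x hS).fderiv]
  calc ‖(-(φ (S x))⁻¹) • (∑ i, (-φ (ℓ (p i x))) • fderiv ℝ (p i) x : E →L[ℝ] ℝ)‖
      ≤ (φ (S x))⁻¹ * ∑ i, φ (ℓ (p i x)) * ‖fderiv ℝ (p i) x‖ := by
        rw [norm_smul, norm_neg, norm_inv, Real.norm_of_nonneg hφS.le]
        refine mul_le_mul_of_nonneg_left ?_ (inv_pos.2 hφS).le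
        refine (norm_sum_le (E := E →L[ℝ] ℝ) _ _).trans_eq (sum_congr rfl fun i _ => ?_)
        rw [norm_smul, norm_neg, Real.norm_of_nonneg (h.rate_pos _ (h.pos _)).le]
    _ = ∑ i, φ (ℓ (p i x)) / φ (S x) * ‖fderiv ℝ (p i) x‖ := by
        rw [mul_sum]; exact sum_congr rfl fun i _ => by ring
    _ ≤ ∑ i, ‖fderiv ℝ (p i) x‖ :=
        sum_le_sum fun i _ => mul_le_of_le_one_left (norm_nonneg _)
          ((div_le_one hφS).2 (hle i))

theorem ne_zero_of_sum_lt {E ι : Type*} [Zero E] [Fintype ι] [Nonempty ι]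
    (h : IsInvertibleLoss ℓ g φ) {p : ι → E → ℝ} (hp : ∀ i, p i 0 = 0) {x : E}
    (hx : ∑ i, ℓ (p i x) < ℓ 0) : x ≠ 0 := by
  rintro rfl
  obtain ⟨i⟩ := ‹Nonempty ι›
  have := single_le_sum (fun j _ => (h.pos (p j 0)).le) (mem_univ i)
  simp only [hp] at this hx
  linarith

end IsInvertibleLoss

theorem isInvertibleLoss_exp : IsInvertibleLoss (fun z => exp (-z)) (fun y => -log y) id where
  pos z := exp_pos _
  left_inv z := by simp
  right_inv y hy := by simp [exp_log hy]
  continuousOn_inv := continuousOn_log.neg.mono fun y hy => ne_of_gt hy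
  hasDerivAt z := by simpa using (hasDerivAt_neg z).exp
  rate_pos _ hy := hy
  rate_mono := monotone_id.monotoneOn _

theorem isInvertibleLoss_logistic :
    IsInvertibleLoss (fun z => log (1 + exp (-z))) (fun y => -log (exp y - 1))
      (fun y => 1 - exp (-y)) where
  pos z := log_pos (by linarith [exp_pos (-z)])
  left_inv z := by simp [exp_log (by positivity : 0 < 1 + exp (-z))]
  right_inv y hy := by
    simp [exp_log (sub_pos.2 (one_lt_exp_iff.2 hy))]
  continuousOn_inv := by
    refine (continuousOn_log.comp (continuous_exp.sub continuous_const).continuousOn ?_).neg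
    exact fun y hy => (sub_pos.2 (one_lt_exp_iff.2 hy)).ne'
  hasDerivAt z := by
    have h1 : 0 < 1 + exp (-z) := by positivity
    convert ((hasDerivAt_neg z).exp.const_add 1).log h1.ne' using 1
    rw [exp_neg (log _), exp_log h1]
    field_simp
    ring
  rate_pos y hy := by simpa using hy
  rate_mono a _ b _ hab := by dsimp only; gcongr

section Homogeneous

variable {E : Type*} [NormedAddCommGroup E] [NormedSpace ℝ E]

def IsPosHomogeneous (f : E → ℝ) (L : ℝ) : Prop :=
  ∀ c : ℝ, 0 < c → ∀ x, f (c • x) = c ^ L * f x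

variable {f : E → ℝ} {L : ℝ}

theorem IsPosHomogeneous.apply_zero (hf : IsPosHomogeneous f L) (hL : L ≠ 0) : f 0 = 0 := by
  have h2 : (2 : ℝ) ^ L ≠ 1 := by
    rw [← rpow_zero 2, Ne, rpow_right_inj two_pos (by norm_num)]
    exact hL
  have h := hf 2 two_pos 0
  rw [smul_zero] at h
  exact (mul_eq_zero.1 (by linear_combination -h : ((2 : ℝ) ^ L - 1) * f 0 = 0)).resolve_left
    (sub_ne_zero.2 h2)

theorem IsPosHomogeneous.fderiv_smul (hf : IsPosHomogeneous f L) {c : ℝ} (hc : 0 < c) {x : E}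
    (hx : DifferentiableAt ℝ f x) : fderiv ℝ f (c • x) = c ^ (L - 1) • fderiv ℝ f x := by
  have hfc : ∀ y, f y = c ^ L * f (c⁻¹ • y) := fun y => by
    rw [← hf c hc, smul_inv_smul₀ hc.ne']
  have hx' : HasFDerivAt f (fderiv ℝ f x) (c⁻¹ • c • x) := by
    rw [inv_smul_smul₀ hc.ne']; exact hx.hasFDerivAt
  have hd := ((hx'.comp (c • x) ((hasFDerivAt_id (c • x)).const_smul c⁻¹)).const_mul (c ^ L))
  rw [(hd.congr_of_eventuallyEq (Eventually.of_forall hfc)).fderiv]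
  ext v
  simp only [ContinuousLinearMap.comp_smulₛₗ, map_inv₀, ringHom_apply, ContinuousLinearMap.comp_id,
    smul_apply, smul_eq_mul, rpow_sub_one hc.ne']
  ring

theorem IsPosHomogeneous.exists_norm_fderiv_le [ProperSpace E] (hf : IsPosHomogeneous f L)
    (hdiff : ∀ x ∈ Metric.sphere (0 : E) 1, DifferentiableAt ℝ f x)
    (hcont : ContinuousOn (fderiv ℝ f) (Metric.sphere 0 1)) :
    ∃ M > 0, ∀ x ≠ 0, ‖fderiv ℝ f x‖ ≤ M * ‖x‖ ^ (L - 1) := by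
  obtain ⟨M, hM⟩ := (isCompact_sphere (0 : E) 1).exists_bound_of_continuousOn hcont
  refine ⟨max M 1, by positivity, fun x hx => ?_⟩
  have hx₀ : 0 < ‖x‖ := norm_pos_iff.2 hx
  have hu : ‖x‖⁻¹ • x ∈ Metric.sphere (0 : E) 1 := by
    simp [norm_smul, hx₀.ne']
  calc ‖fderiv ℝ f x‖ = ‖fderiv ℝ f (‖x‖ • ‖x‖⁻¹ • x)‖ := by rw [smul_inv_smul₀ hx₀.ne']
    _ = ‖x‖ ^ (L - 1) * ‖fderiv ℝ f (‖x‖⁻¹ • x)‖ := by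
        rw [hf.fderiv_smul hx₀ (hdiff _ hu), norm_smul, Real.norm_of_nonneg (by positivity)]
    _ ≤ ‖x‖ ^ (L - 1) * max M 1 := by gcongr; exact (hM _ hu).trans (le_max_left _ _)
    _ = max M 1 * ‖x‖ ^ (L - 1) := mul_comm _ _

end Homogeneous

section InnerProductSpace

variable {F : Type*} [NormedAddCommGroup F] [InnerProductSpace ℝ F]

theorem norm_gradient_eq_norm_fderiv [CompleteSpace F] (f : F → ℝ) (x : F) :
    ‖gradient f x‖ = ‖fderiv ℝ f x‖ := by
  rw [← toDual_gradient, LinearIsometryEquiv.norm_map]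

theorem continuousAt_fderiv_of_lipschitzOnWith_gradient [CompleteSpace F] {f : F → ℝ} {x : F}
    {K : NNReal} {s : Set F} (hs : s ∈ 𝓝 x) (hK : LipschitzOnWith K (gradient f) s) :
    ContinuousAt (fderiv ℝ f) x := by
  rw [← toDual_comp_gradient]
  exact (toDual ℝ F).continuous.continuousAt.comp (hK.continuousOn.continuousAt hs)

theorem real_inner_div_le_of_norm_le_rpow {W v : F} {M L : ℝ} (hL : 0 < L) (hW : W ≠ 0)
    (hv : ‖v‖ ≤ M * ‖W‖ ^ (L - 1)) : ⟪W, v⟫ / L ≤ M / L * ‖W‖ ^ L :=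
  calc ⟪W, v⟫ / L ≤ ‖W‖ * ‖v‖ / L := by gcongr; exact real_inner_le_norm W v
    _ ≤ ‖W‖ * (M * ‖W‖ ^ (L - 1)) / L := by gcongr
    _ = M / L * ‖W‖ ^ L := by rw [rpow_sub_one (norm_ne_zero_iff.2 hW)]; field_simp

end InnerProductSpace

theorem statement_11
    (n k : ℕ) (hn : 0 < n) (L : ℝ) (hL : 0 < L)
    (p : Fin n → EuclideanSpace ℝ (Fin k) → ℝ)
    (hpdiff : ∀ i, ∀ x : EuclideanSpace ℝ (Fin k), x ≠ 0 → DifferentiableAt ℝ (p i) x)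
    (hplip : ∀ i, ∀ x : EuclideanSpace ℝ (Fin k), x ≠ 0 →
      ∃ (K : NNReal) (s : Set (EuclideanSpace ℝ (Fin k))),
        s ∈ nhds x ∧ LipschitzOnWith K (gradient (p i)) s)
    (hhom : ∀ i (c : ℝ), 0 < c → ∀ W, p i (c • W) = c ^ L * p i W)
    (ℓ : ℝ → ℝ)
    (hℓ : ℓ = (fun z => Real.exp (-z)) ∨ ℓ = fun z => Real.log (1 + Real.exp (-z)))
    (𝓛 : EuclideanSpace ℝ (Fin k) → ℝ)
    (h𝓛 : 𝓛 = fun W => ∑ i, ℓ (p i W))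
    (α : EuclideanSpace ℝ (Fin k) → ℝ)
    (hα : α = fun W => Function.invFun ℓ (𝓛 W)) :
    ∃ C : ℝ, 0 < C ∧ ∀ W : EuclideanSpace ℝ (Fin k), 𝓛 W < ℓ 0 →
      W ≠ 0 ∧
      ⟪W, gradient α W⟫ / L ≤ C * ‖W‖ ^ L ∧
      ‖gradient α W‖ ≤ C * ‖W‖ ^ (L - 1) := by
  subst h𝓛
  have : Nonempty (Fin n) := ⟨⟨0, hn⟩⟩
  obtain ⟨g, φ, hloss⟩ : ∃ g φ, IsInvertibleLoss ℓ g φ := by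
    rcases hℓ with rfl | rfl
    exacts [⟨_, _, isInvertibleLoss_exp⟩, ⟨_, _, isInvertibleLoss_logistic⟩]
  have hhom' (i : Fin n) : IsPosHomogeneous (p i) L := hhom i
  have hbound (i : Fin n) : ∃ B > 0, ∀ x ≠ 0, ‖fderiv ℝ (p i) x‖ ≤ B * ‖x‖ ^ (L - 1) := by
    refine (hhom' i).exists_norm_fderiv_le
      (fun x hx => hpdiff i x (ne_zero_of_mem_unit_sphere ⟨x, hx⟩)) fun x hx => ?_
    obtain ⟨K, s, hs, hK⟩ := hplip i x (ne_zero_of_mem_unit_sphere ⟨x, hx⟩)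
    exact (continuousAt_fderiv_of_lipschitzOnWith_gradient hs hK).continuousWithinAt
  choose B hB_pos hB using hbound
  set M := ∑ i, B i
  have hM : 0 < M := sum_pos (fun i _ => hB_pos i) univ_nonempty
  refine ⟨M + M / L, add_pos hM (div_pos hM hL), fun W hW => ?_⟩
  have hW₀ : W ≠ 0 := hloss.ne_zero_of_sum_lt (fun i => (hhom' i).apply_zero hL.ne') hW
  have hgrad : ‖gradient α W‖ ≤ M * ‖W‖ ^ (L - 1) :=
    calc ‖gradient α W‖ = ‖fderiv ℝ α W‖ := norm_gradient_eq_norm_fderiv α W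
      _ ≤ ∑ i, ‖fderiv ℝ (p i) W‖ := hα ▸ hloss.norm_fderiv_invFun_sum_le fun i => hpdiff i W hW₀
      _ ≤ ∑ i, B i * ‖W‖ ^ (L - 1) := sum_le_sum fun i _ => hB i W hW₀
      _ = M * ‖W‖ ^ (L - 1) := (sum_mul _ _ _).symm
  refine ⟨hW₀, (real_inner_div_le_of_norm_le_rpow hL hW₀ hgrad).trans ?_, hgrad.trans ?_⟩
  · gcongr; exact le_add_of_nonneg_left hM.le
  · gcongr; exact le_add_of_nonneg_right (div_pos hM hL).le
end

section
/- Let p_1,…,p_n : ℝ^k → ℝ be twice continuously differentiable and L-positively homogeneous (L > 0), let ℓ be the exponential or logistic loss, 𝓛(W) = Σ_i ℓ(p_i(W)), and let W : [0,∞) → ℝ^k be a C¹ gradient flow with dW_t/dt = −∇𝓛(W_t) and 𝓛(W_0) < ℓ(0). Then for all t, W_t ≠ 0 and ∇𝓛(W_t) ≠ 0, so the angle θ_t between W_t and −∇𝓛(W_t) is well defined and lies in [0, π/2), and ∫_0^∞ (−ℓ'(α(W_t)))·‖W_t‖^{L−2}·tan²(θ_t) dt < ∞, where α(W) = ℓ^{−1}(𝓛(W)).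 -/
/-
Write `α(W) = ℓ⁻¹(𝓛(W))` for the smoothed margin and `φ = -ℓ' ∘ α`. Euler's identity for the
homogeneous `pᵢ` gives `⟪W, -∇𝓛(W)⟫ = L ∑ᵢ -ℓ'(pᵢ(W)) pᵢ(W)`; since every `pᵢ(W) ≥ α(W)` and
`y ↦ -ℓ'(ℓ⁻¹(y))` is subadditive for both losses, this is at least `L α φ > 0` as long as
`𝓛(W) < ℓ(0)`, which persists along the flow because `𝓛` decreases. The Lyapunov function is
`h = ‖W‖^L / α(W)`, the inverse of the normalized smoothed margin: differentiating it and using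
`⟪W, -∇𝓛⟫ ≥ L α φ` once more gives `-h' ≥ L² φ ‖W‖^(L-2) tan² θ ≥ 0`, so the integral is at most
`h(W₀) / L²`.
-/

open Filter Set MeasureTheory
open scoped RealInnerProductSpace

structure IsMarginLoss (ℓ ψ : ℝ → ℝ) : Prop where
  contDiff : ContDiff ℝ 1 ℓ
  pos : ∀ z, 0 < ℓ z
  deriv_neg : ∀ z, deriv ℓ z < 0
  apply_inv : ∀ y, 0 < y → ℓ (ψ y) = y
  hasDerivAt_inv : ∀ y, 0 < y → HasDerivAt ψ (deriv ℓ (ψ y))⁻¹ y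
  neg_deriv_inv_add_le : ∀ x y, 0 < x → 0 < y →
    -deriv ℓ (ψ (x + y)) ≤ -deriv ℓ (ψ x) + -deriv ℓ (ψ y)

namespace IsMarginLoss

variable {ℓ ψ : ℝ → ℝ}

theorem strictAnti (hℓ : IsMarginLoss ℓ ψ) : StrictAnti ℓ := strictAnti_of_deriv_neg hℓ.deriv_neg

theorem inv_apply (hℓ : IsMarginLoss ℓ ψ) (z : ℝ) : ψ (ℓ z) = z :=
  hℓ.strictAnti.injective (hℓ.apply_inv _ (hℓ.pos z))

theorem invFun_eq (hℓ : IsMarginLoss ℓ ψ) {y : ℝ} (hy : 0 < y) : Function.invFun ℓ y = ψ y :=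
  hℓ.strictAnti.injective <| by
    rw [Function.invFun_eq ⟨ψ y, hℓ.apply_inv y hy⟩, hℓ.apply_inv y hy]

theorem inv_pos (hℓ : IsMarginLoss ℓ ψ) {y : ℝ} (hy₀ : 0 < y) (hy : y < ℓ 0) : 0 < ψ y :=
  hℓ.strictAnti.lt_iff_gt.1 (by rwa [hℓ.apply_inv y hy₀])

theorem neg_deriv_inv_sum_le (hℓ : IsMarginLoss ℓ ψ) {ι : Type*} {s : Finset ι}
    (hs : s.Nonempty) {y : ι → ℝ} (hy : ∀ i ∈ s, 0 < y i) :
    -deriv ℓ (ψ (∑ i ∈ s, y i)) ≤ ∑ i ∈ s, -deriv ℓ (ψ (y i)) := by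
  induction hs using Finset.Nonempty.cons_induction with
  | singleton i => simp
  | cons i s hi hs ih =>
    simp only [Finset.forall_mem_cons] at hy
    rw [Finset.sum_cons, Finset.sum_cons]
    exact (hℓ.neg_deriv_inv_add_le _ _ hy.1 (Finset.sum_pos hy.2 hs)).trans
      (add_le_add le_rfl (ih hy.2))

theorem inv_sum_mul_neg_deriv_le (hℓ : IsMarginLoss ℓ ψ) {ι : Type*} {s : Finset ι}
    (hs : s.Nonempty) {z : ι → ℝ} (hz : ∑ i ∈ s, ℓ (z i) ≤ ℓ 0) :
    ψ (∑ i ∈ s, ℓ (z i)) * -deriv ℓ (ψ (∑ i ∈ s, ℓ (z i))) ≤ ∑ i ∈ s, -deriv ℓ (z i) * z i := by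
  set a := ψ (∑ i ∈ s, ℓ (z i))
  have ha : ℓ a = ∑ i ∈ s, ℓ (z i) := hℓ.apply_inv _ (Finset.sum_pos (fun i _ => hℓ.pos _) hs)
  have ha₀ : 0 ≤ a := hℓ.strictAnti.le_iff_ge.1 (ha ▸ hz)
  have ha_le : ∀ i ∈ s, a ≤ z i := fun i hi => hℓ.strictAnti.le_iff_ge.1 <|
    ha ▸ Finset.single_le_sum (fun j _ => (hℓ.pos (z j)).le) hi
  calc a * -deriv ℓ a
      ≤ a * ∑ i ∈ s, -deriv ℓ (z i) := by
        gcongr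
        simpa only [hℓ.inv_apply] using hℓ.neg_deriv_inv_sum_le hs (fun i _ => hℓ.pos (z i))
    _ ≤ ∑ i ∈ s, -deriv ℓ (z i) * z i := by
        rw [Finset.mul_sum]
        refine Finset.sum_le_sum fun i hi => ?_
        rw [mul_comm]
        exact mul_le_mul_of_nonneg_left (ha_le i hi) (neg_nonneg.2 (hℓ.deriv_neg _).le)

end IsMarginLoss

theorem deriv_exp_neg : deriv (fun z => Real.exp (-z)) = fun z => -Real.exp (-z) := by
  ext z
  exact ((Real.hasDerivAt_exp _).comp z (hasDerivAt_neg z)).deriv.trans (by simp)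

theorem isMarginLoss_exp : IsMarginLoss (fun z => Real.exp (-z)) (fun y => -Real.log y) where
  contDiff := by fun_prop
  pos _ := Real.exp_pos _
  deriv_neg _ := by simp [deriv_exp_neg, Real.exp_pos]
  apply_inv y hy := by simp [Real.exp_log hy]
  hasDerivAt_inv y hy := by
    simpa [deriv_exp_neg, Real.exp_log hy] using (Real.hasDerivAt_log hy.ne').fun_neg
  neg_deriv_inv_add_le x y hx hy := by
    simp [deriv_exp_neg, Real.exp_log hx, Real.exp_log hy, Real.exp_log (add_pos hx hy)]

theorem deriv_log_one_add_exp_neg :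
    deriv (fun z => Real.log (1 + Real.exp (-z))) = fun z => -(1 + Real.exp z)⁻¹ := by
  ext z
  have h := (((Real.hasDerivAt_exp _).comp z (hasDerivAt_neg z)).const_add 1).log
    (by positivity : 1 + Real.exp (-z) ≠ 0)
  refine h.deriv.trans ?_
  simp only [Function.comp_apply, Real.exp_neg]
  field_simp
  ring

theorem deriv_log_one_add_exp_neg_neg_log_exp_sub_one {y : ℝ} (hy : 0 < y) :
    deriv (fun z => Real.log (1 + Real.exp (-z))) (-Real.log (Real.exp y - 1)) =
      -(1 - Real.exp (-y)) := by
  have hy₁ : 0 < Real.exp y - 1 := sub_pos.2 (Real.one_lt_exp_iff.2 hy)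
  rw [deriv_log_one_add_exp_neg]
  simp only [Real.exp_neg, Real.exp_log hy₁]
  field_simp
  ring

theorem isMarginLoss_logistic :
    IsMarginLoss (fun z => Real.log (1 + Real.exp (-z))) (fun y => -Real.log (Real.exp y - 1)) where
  contDiff := (contDiff_const.add (Real.contDiff_exp.comp contDiff_neg)).log fun _ =>
    (add_pos one_pos (Real.exp_pos _)).ne'
  pos z := Real.log_pos (by linarith [Real.exp_pos (-z)])
  deriv_neg _ := by
    simp only [deriv_log_one_add_exp_neg]
    exact neg_neg_of_pos (by positivity)
  apply_inv y hy := by simp [Real.exp_log (sub_pos.2 (Real.one_lt_exp_iff.2 hy))]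
  hasDerivAt_inv y hy := by
    have hy₁ : 0 < Real.exp y - 1 := sub_pos.2 (Real.one_lt_exp_iff.2 hy)
    refine (((Real.hasDerivAt_exp y).sub_const 1).log hy₁.ne').fun_neg.congr_deriv ?_
    rw [deriv_log_one_add_exp_neg_neg_log_exp_sub_one hy, Real.exp_neg]
    field_simp
  neg_deriv_inv_add_le x y hx hy := by
    simp only [deriv_log_one_add_exp_neg_neg_log_exp_sub_one, hx, hy, add_pos, neg_neg]
    have hx' : Real.exp (-x) ≤ 1 := Real.exp_le_one_iff.2 (by linarith)
    have hy' : Real.exp (-y) ≤ 1 := Real.exp_le_one_iff.2 (by linarith)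
    rw [neg_add, Real.exp_add]
    nlinarith [mul_nonneg (sub_nonneg.2 hx') (sub_nonneg.2 hy')]

theorem HasFDerivAt.apply_self_of_homogeneous {E : Type*} [NormedAddCommGroup E]
    [NormedSpace ℝ E] {f : E → ℝ} {f' : E →L[ℝ] ℝ} {x : E} {L : ℝ}
    (hf : HasFDerivAt f f' x) (hhom : ∀ c : ℝ, 0 < c → f (c • x) = c ^ L * f x) :
    f' x = L * f x := by
  have hray : HasDerivAt (fun c : ℝ => f (c • x)) (f' x) 1 := by
    have hf₁ : HasFDerivAt f f' ((1 : ℝ) • x) := by rwa [one_smul]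
    simpa [Function.comp_def] using
      hf₁.comp_hasDerivAt (1 : ℝ) ((hasDerivAt_id (1 : ℝ)).smul_const x)
  have hpow : HasDerivAt (fun c : ℝ => c ^ L * f x) (L * f x) 1 := by
    simpa using (Real.hasDerivAt_rpow_const (p := L) (Or.inl one_ne_zero)).mul_const (f x)
  refine hray.unique (hpow.congr_of_eventuallyEq ?_)
  filter_upwards [eventually_gt_nhds one_pos] with c hc using hhom c hc

section Calculus

variable {E : Type*} [NormedAddCommGroup E] [InnerProductSpace ℝ E]

theorem HasDerivAt.norm_rpow {W : ℝ → E} {W' : E} {t L : ℝ} (hW : HasDerivAt W W' t)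
    (h₀ : W t ≠ 0) : HasDerivAt (fun s => ‖W s‖ ^ L) (L * ‖W t‖ ^ (L - 2) * ⟪W t, W'⟫) t := by
  have hsq : ∀ s, ‖W s‖ ^ L = (‖W s‖ ^ 2) ^ (L / 2) := fun s => by
    rw [← Real.rpow_natCast, ← Real.rpow_mul (norm_nonneg _)]; ring_nf
  have hpos : 0 < ‖W t‖ := norm_pos_iff.2 h₀
  have hderiv := hW.norm_sq.rpow_const (p := L / 2) (Or.inl (by positivity))
  simp only [← hsq] at hderiv
  refine hderiv.congr_deriv ?_
  rw [← Real.rpow_natCast, ← Real.rpow_mul (norm_nonneg _)]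
  ring_nf

variable [CompleteSpace E]

theorem ContDiff.continuous_gradient {f : E → ℝ} (hf : ContDiff ℝ 1 f) :
    Continuous (gradient f) :=
  (InnerProductSpace.toDual ℝ E).symm.continuous.comp (hf.continuous_fderiv one_ne_zero)

theorem inner_neg_gradient_sum_comp {ι : Type*} [Fintype ι] {ℓ : ℝ → ℝ} {p : ι → E → ℝ} {L : ℝ}
    (hℓ : Differentiable ℝ ℓ) (hp : ∀ i, Differentiable ℝ (p i))
    (hhom : ∀ i (c : ℝ), 0 < c → ∀ x, p i (c • x) = c ^ L * p i x) (x : E) :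
    ⟪x, -gradient (fun x => ∑ i, ℓ (p i x)) x⟫ = L * ∑ i, -deriv ℓ (p i x) * p i x := by
  have hF : HasFDerivAt (fun x => ∑ i, ℓ (p i x))
      (∑ i, deriv ℓ (p i x) • fderiv ℝ (p i) x) x :=
    HasFDerivAt.fun_sum fun i _ => (hℓ _).hasDerivAt.comp_hasFDerivAt x (hp i x).hasFDerivAt
  rw [inner_neg_right, real_inner_comm, inner_gradient_left, hF.fderiv]
  simp only [sum_apply, smul_apply, smul_eq_mul,
    ((hp _ x).hasFDerivAt.apply_self_of_homogeneous fun c hc => hhom _ c hc x)]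
  rw [Finset.mul_sum, ← Finset.sum_neg_distrib]
  exact Finset.sum_congr rfl fun i _ => by ring

theorem hasDerivAt_comp_gradient_flow {f : E → ℝ} {W : ℝ → E} {t : ℝ}
    (hf : DifferentiableAt ℝ f (W t)) (hW : HasDerivAt W (-gradient f (W t)) t) :
    HasDerivAt (fun s => f (W s)) (-‖gradient f (W t)‖ ^ 2) t := by
  have := hf.hasFDerivAt.comp_hasDerivAt t hW
  rwa [← inner_gradient_left, inner_neg_right, real_inner_self_eq_norm_sq] at this

theorem antitoneOn_comp_gradient_flow {f : E → ℝ} {W : ℝ → E} (hf : Differentiable ℝ f)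
    (hW : ∀ t, 0 ≤ t → HasDerivAt W (-gradient f (W t)) t) :
    AntitoneOn (fun s => f (W s)) (Ici 0) := by
  have hderiv t (ht : 0 ≤ t) := hasDerivAt_comp_gradient_flow (hf (W t)) (hW t ht)
  refine antitoneOn_of_deriv_nonpos (convex_Ici 0)
    (fun t ht => (hderiv t ht).continuousAt.continuousWithinAt) (fun t ht => ?_) fun t ht => ?_
  all_goals rw [interior_Ici] at ht
  · exact (hderiv t ht.le).differentiableAt.differentiableWithinAt
  · exact (hderiv t ht.le).deriv ▸ neg_nonpos.2 (sq_nonneg _)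

theorem margin_le_inner_neg_gradient_sum_comp {ι : Type*} [Fintype ι] [Nonempty ι] {ℓ ψ : ℝ → ℝ}
    {p : ι → E → ℝ} {L : ℝ} (hL : 0 ≤ L) (hℓ : IsMarginLoss ℓ ψ)
    (hp : ∀ i, Differentiable ℝ (p i))
    (hhom : ∀ i (c : ℝ), 0 < c → ∀ x, p i (c • x) = c ^ L * p i x) {x : E}
    (hx : ∑ i, ℓ (p i x) ≤ ℓ 0) :
    L * (ψ (∑ i, ℓ (p i x)) * -deriv ℓ (ψ (∑ i, ℓ (p i x)))) ≤
      ⟪x, -gradient (fun x => ∑ i, ℓ (p i x)) x⟫ := by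
  rw [inner_neg_gradient_sum_comp (hℓ.contDiff.differentiable one_ne_zero) hp hhom]
  exact mul_le_mul_of_nonneg_left (hℓ.inv_sum_mul_neg_deriv_le Finset.univ_nonempty hx) hL

end Calculus

theorem setLIntegral_Ici_lt_top_of_le_neg_deriv {f h h' : ℝ → ℝ} {a : ℝ}
    (hf : ContinuousOn f (Ici a)) (hf₀ : ∀ t, a ≤ t → 0 ≤ f t)
    (hh : ∀ t, a ≤ t → HasDerivAt h (h' t) t) (hfh : ∀ t, a ≤ t → f t ≤ -h' t)
    (hh₀ : ∀ t, a ≤ t → 0 ≤ h t) :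
    ∫⁻ t in Ici a, ENNReal.ofReal (f t) < ⊤ := by
  have hfi : ∀ T, IntegrableOn f (Icc a T) := fun T =>
    (hf.mono Icc_subset_Ici_self).integrableOn_Icc
  refine IntegrableOn.setLIntegral_lt_top ?_
  rw [integrableOn_Ici_iff_integrableOn_Ioi]
  refine integrableOn_Ioi_of_intervalIntegral_norm_bounded (h a) a (l := atTop) (b := id)
    (fun T => (hfi T).mono_set Ioc_subset_Icc_self) tendsto_id ?_
  filter_upwards [eventually_ge_atTop a] with T hT
  have hnorm : ∫ t in a..T, ‖f t‖ = ∫ t in a..T, f t :=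
    intervalIntegral.integral_congr fun t ht => by
      rw [uIcc_of_le hT] at ht
      exact Real.norm_of_nonneg (hf₀ t ht.1)
  have hftc := intervalIntegral.integral_le_sub_of_hasDeriv_right_of_le (g := fun t => -h t) hT
    (fun t ht => (hh t ht.1).neg.continuousAt.continuousWithinAt)
    (fun t ht => (hh t ht.1.le).neg.hasDerivWithinAt) (hfi T) fun t ht => hfh t ht.1.le
  rw [id, hnorm]
  linarith [hh₀ T hT]

theorem sq_mul_sub_sq_div_sq_le {L φ a β K : ℝ} (hL : 0 ≤ L) (hφ : 0 < φ) (ha : 0 < a)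
    (hβ : 0 < β) (hmargin : L * (a * φ) ≤ β) (hK : β ^ 2 ≤ K) :
    L ^ 2 * φ * ((K - β ^ 2) / β ^ 2) ≤ (K / φ - L * β * a) / a ^ 2 := by
  have h₁ : L ^ 2 * φ / β ^ 2 ≤ 1 / (a ^ 2 * φ) := by
    rw [div_le_div_iff₀ (by positivity) (by positivity)]
    nlinarith [mul_le_mul hmargin hmargin (by positivity) hβ.le]
  have h₂ : L * β * a ≤ β ^ 2 / φ := by
    rw [le_div_iff₀ hφ]
    nlinarith
  calc L ^ 2 * φ * ((K - β ^ 2) / β ^ 2) = L ^ 2 * φ / β ^ 2 * (K - β ^ 2) := by ring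
    _ ≤ 1 / (a ^ 2 * φ) * (K - β ^ 2) := by gcongr
    _ = (K / φ - β ^ 2 / φ) / a ^ 2 := by field_simp
    _ ≤ (K / φ - L * β * a) / a ^ 2 := by gcongr

section Angle

open InnerProductGeometry

variable {E : Type*} [NormedAddCommGroup E] [InnerProductSpace ℝ E]

theorem ne_zero_and_ne_zero_of_inner_pos {x y : E} (h : 0 < ⟪x, y⟫) : x ≠ 0 ∧ y ≠ 0 := by
  constructor <;> rintro rfl <;> simp at h

theorem tan_sq_angle (x y : E) :
    Real.tan (angle x y) ^ 2 =
      (1 - (⟪x, y⟫ / (‖x‖ * ‖y‖)) ^ 2) / (⟪x, y⟫ / (‖x‖ * ‖y‖)) ^ 2 := by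
  rw [Real.tan_eq_sin_div_cos, div_pow, Real.sin_sq, cos_angle]

theorem sq_mul_rpow_mul_tan_sq_angle_le {x y : E} {L φ a : ℝ} (hL : 0 < L) (hφ : 0 < φ)
    (ha : 0 < a) (hx : x ≠ 0) (hmargin : L * (a * φ) ≤ ⟪x, y⟫) :
    L ^ 2 * (φ * ‖x‖ ^ (L - 2) * Real.tan (angle x y) ^ 2) ≤
      (‖x‖ ^ L * ‖y‖ ^ 2 / φ - L * ‖x‖ ^ (L - 2) * ⟪x, y⟫ * a) / a ^ 2 := by
  have hβ : 0 < ⟪x, y⟫ := (by positivity : 0 < L * (a * φ)).trans_le hmargin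
  have hy : y ≠ 0 := (ne_zero_and_ne_zero_of_inner_pos hβ).2
  have hpow : ‖x‖ ^ L = ‖x‖ ^ (L - 2) * ‖x‖ ^ 2 := by
    rw [← Real.rpow_natCast, ← Real.rpow_add (norm_pos_iff.2 hx)]; norm_num
  have hK : ⟪x, y⟫ ^ 2 ≤ (‖x‖ * ‖y‖) ^ 2 :=
    pow_le_pow_left₀ hβ.le (real_inner_le_norm x y) 2
  have hX : 0 < ‖x‖ ^ (L - 2) := Real.rpow_pos_of_pos (norm_pos_iff.2 hx) _
  have hscaled :=
    mul_le_mul_of_nonneg_left (sq_mul_sub_sq_div_sq_le hL.le hφ ha hβ hmargin hK) hX.le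
  have hnorm : 0 < ‖x‖ * ‖y‖ := by positivity
  have htan : Real.tan (angle x y) ^ 2 = ((‖x‖ * ‖y‖) ^ 2 - ⟪x, y⟫ ^ 2) / ⟪x, y⟫ ^ 2 := by
    rw [tan_sq_angle]
    field_simp
  rw [htan, hpow]
  linear_combination hscaled

end Angle

section Flow

open InnerProductGeometry

variable {E : Type*} [NormedAddCommGroup E] [InnerProductSpace ℝ E] [CompleteSpace E]
  {F : E → ℝ} {ℓ ψ : ℝ → ℝ} {W : ℝ → E}

theorem continuousOn_neg_deriv_mul_rpow_mul_tan_sq (L : ℝ) (hℓ : IsMarginLoss ℓ ψ)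
    (hF : ContDiff ℝ 1 F) (hF₀ : ∀ x, 0 < F x)
    (hW : ∀ t, 0 ≤ t → HasDerivAt W (-gradient F (W t)) t)
    (hinner : ∀ t, 0 ≤ t → 0 < ⟪W t, -gradient F (W t)⟫) :
    ContinuousOn (fun t => -deriv ℓ (ψ (F (W t))) * ‖W t‖ ^ (L - 2) *
      Real.tan (angle (W t) (-gradient F (W t))) ^ 2) (Ici 0) := by
  have hWc : ContinuousOn W (Ici 0) := fun t ht => (hW t ht).continuousAt.continuousWithinAt
  have hne : ∀ t ∈ Ici (0 : ℝ), W t ≠ 0 ∧ -gradient F (W t) ≠ 0 := fun t ht =>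
    ne_zero_and_ne_zero_of_inner_pos (hinner t ht)
  have hψ : ContinuousOn (fun t => ψ (F (W t))) (Ici 0) := fun t ht =>
    ContinuousAt.comp_continuousWithinAt (f := fun t => F (W t))
      (hℓ.hasDerivAt_inv _ (hF₀ (W t))).continuousAt (hF.continuous.comp_continuousOn hWc t ht)
  have hangle : ContinuousOn (fun t => angle (W t) (-gradient F (W t))) (Ici 0) := fun t ht =>
    ContinuousAt.comp_continuousWithinAt (f := fun t => (W t, -gradient F (W t)))
      (g := fun y : E × E => angle y.1 y.2)
      (continuousAt_angle (x := (W t, -gradient F (W t))) (hne t ht).1 (hne t ht).2)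
      ((hWc t ht).prodMk ((hF.continuous_gradient.comp_continuousOn hWc).neg t ht))
  have htan : ContinuousOn (fun t => Real.tan (angle (W t) (-gradient F (W t)))) (Ici 0) := by
    refine fun t ht => ContinuousAt.comp_continuousWithinAt (g := Real.tan)
      (Real.continuousAt_tan.2 ?_) (hangle t ht)
    have hnorm : 0 < ‖W t‖ * ‖-gradient F (W t)‖ :=
      mul_pos (norm_pos_iff.2 (hne t ht).1) (norm_pos_iff.2 (hne t ht).2)
    rw [cos_angle]
    exact (div_pos (hinner t ht) hnorm).ne'
  exact (((hℓ.contDiff.continuous_deriv le_rfl).comp_continuousOn hψ).neg.mul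
    (hWc.norm.rpow_const fun t ht => Or.inl (norm_ne_zero_iff.2 (hne t ht).1))).mul (htan.pow 2)

theorem inner_neg_gradient_pos_of_gradient_flow {L : ℝ} (hL : 0 < L) (hℓ : IsMarginLoss ℓ ψ)
    (hF : Differentiable ℝ F) (hF₀ : ∀ x, 0 < F x)
    (hmargin : ∀ x, F x < ℓ 0 → L * (ψ (F x) * -deriv ℓ (ψ (F x))) ≤ ⟪x, -gradient F x⟫)
    (hW : ∀ t, 0 ≤ t → HasDerivAt W (-gradient F (W t)) t) (hinit : F (W 0) < ℓ 0) {t : ℝ}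
    (ht : 0 ≤ t) : 0 < ⟪W t, -gradient F (W t)⟫ := by
  have hbelow : F (W t) < ℓ 0 :=
    (antitoneOn_comp_gradient_flow hF hW self_mem_Ici ht ht).trans_lt hinit
  exact (mul_pos hL (mul_pos (hℓ.inv_pos (hF₀ _) hbelow) (neg_pos.2 (hℓ.deriv_neg _)))).trans_le
    (hmargin _ hbelow)

theorem setLIntegral_neg_deriv_mul_rpow_mul_tan_sq_lt_top {L : ℝ} (hL : 0 < L)
    (hℓ : IsMarginLoss ℓ ψ) (hF : ContDiff ℝ 1 F) (hF₀ : ∀ x, 0 < F x)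
    (hmargin : ∀ x, F x < ℓ 0 → L * (ψ (F x) * -deriv ℓ (ψ (F x))) ≤ ⟪x, -gradient F x⟫)
    (hW : ∀ t, 0 ≤ t → HasDerivAt W (-gradient F (W t)) t) (hinit : F (W 0) < ℓ 0) :
    ∫⁻ t in Ici 0, ENNReal.ofReal (-deriv ℓ (ψ (F (W t))) * ‖W t‖ ^ (L - 2) *
      Real.tan (angle (W t) (-gradient F (W t))) ^ 2) < ⊤ := by
  have hFd : Differentiable ℝ F := hF.differentiable one_ne_zero
  have hbelow : ∀ t, 0 ≤ t → F (W t) < ℓ 0 := fun t ht =>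
    (antitoneOn_comp_gradient_flow hFd hW self_mem_Ici ht ht).trans_lt hinit
  have ha : ∀ t, 0 ≤ t → 0 < ψ (F (W t)) := fun t ht => hℓ.inv_pos (hF₀ _) (hbelow t ht)
  have hφ : ∀ z, 0 < -deriv ℓ z := fun z => neg_pos.2 (hℓ.deriv_neg z)
  have hinner : ∀ t, 0 ≤ t → 0 < ⟪W t, -gradient F (W t)⟫ := fun t ht =>
    inner_neg_gradient_pos_of_gradient_flow hL hℓ hFd hF₀ hmargin hW hinit ht
  have hW₀ : ∀ t, 0 ≤ t → W t ≠ 0 := fun t ht =>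
    (ne_zero_and_ne_zero_of_inner_pos (hinner t ht)).1
  refine setLIntegral_Ici_lt_top_of_le_neg_deriv
    (continuousOn_neg_deriv_mul_rpow_mul_tan_sq L hℓ hF hF₀ hW hinner)
    (fun t ht => mul_nonneg (mul_nonneg (hφ _).le (by positivity)) (sq_nonneg _))
    (h := fun t => ‖W t‖ ^ L / ψ (F (W t)) / L ^ 2)
    (fun t ht => (((hW t ht).norm_rpow (hW₀ t ht)).div ((hℓ.hasDerivAt_inv _ (hF₀ _)).comp t
      (hasDerivAt_comp_gradient_flow (hFd _) (hW t ht))) (ha t ht).ne').div_const _)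
    (fun t ht => ?_) fun t ht => by have := ha t ht; positivity
  have hbound := sq_mul_rpow_mul_tan_sq_angle_le hL (hφ _) (ha t ht) (hW₀ t ht)
    (hmargin _ (hbelow t ht))
  rw [norm_neg, ← le_div_iff₀' (by positivity)] at hbound
  refine hbound.trans_eq ?_
  have hd : deriv ℓ (ψ (F (W t))) ≠ 0 := (hℓ.deriv_neg _).ne
  simp only [Function.comp_apply]
  field_simp
  ring

end Flow

theorem statement_13
    (n k : ℕ) (hn : 0 < n) (L : ℝ) (hL : 0 < L)
    (p : Fin n → EuclideanSpace ℝ (Fin k) → ℝ)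
    (hp : ∀ i, ContDiff ℝ 2 (p i))
    (hhom : ∀ i (c : ℝ), 0 < c → ∀ W, p i (c • W) = c ^ L * p i W)
    (ℓ : ℝ → ℝ)
    (hℓ : ℓ = (fun z => Real.exp (-z)) ∨ ℓ = fun z => Real.log (1 + Real.exp (-z)))
    (𝓛 : EuclideanSpace ℝ (Fin k) → ℝ)
    (h𝓛 : 𝓛 = fun W => ∑ i, ℓ (p i W))
    (α : EuclideanSpace ℝ (Fin k) → ℝ)
    (hα : α = fun W => Function.invFun ℓ (𝓛 W))
    (W : ℝ → EuclideanSpace ℝ (Fin k))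
    (hW : ∀ t : ℝ, 0 ≤ t → HasDerivAt W (-gradient 𝓛 (W t)) t)
    (hinit : 𝓛 (W 0) < ℓ 0) :
    (∀ t : ℝ, 0 ≤ t → W t ≠ 0 ∧ gradient 𝓛 (W t) ≠ 0 ∧
      0 < ⟪W t, -gradient 𝓛 (W t)⟫ / (‖W t‖ * ‖gradient 𝓛 (W t)‖)) ∧
    ∫⁻ t in Set.Ici (0 : ℝ),
        ENNReal.ofReal ((-deriv ℓ (α (W t))) * ‖W t‖ ^ (L - 2) *
          ((1 - (⟪W t, -gradient 𝓛 (W t)⟫ / (‖W t‖ * ‖gradient 𝓛 (W t)‖)) ^ 2) /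
            (⟪W t, -gradient 𝓛 (W t)⟫ / (‖W t‖ * ‖gradient 𝓛 (W t)‖)) ^ 2)) < ⊤ := by
  have : Nonempty (Fin n) := ⟨⟨0, hn⟩⟩
  obtain ⟨ψ, hψ⟩ : ∃ ψ, IsMarginLoss ℓ ψ := by
    rcases hℓ with rfl | rfl
    exacts [⟨_, isMarginLoss_exp⟩, ⟨_, isMarginLoss_logistic⟩]
  subst h𝓛 hα
  have hF : ContDiff ℝ 1 fun x => ∑ i, ℓ (p i x) :=
    ContDiff.sum fun i _ => hψ.contDiff.comp ((hp i).of_le one_le_two)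
  have hF₀ x : 0 < ∑ i, ℓ (p i x) := Finset.sum_pos (fun i _ => hψ.pos _) Finset.univ_nonempty
  have hmargin x (hx : ∑ i, ℓ (p i x) < ℓ 0) := margin_le_inner_neg_gradient_sum_comp hL.le hψ
    (fun i => (hp i).differentiable two_ne_zero) hhom hx.le
  refine ⟨fun t ht => ?_, ?_⟩
  · have hpos := inner_neg_gradient_pos_of_gradient_flow hL hψ (hF.differentiable one_ne_zero)
      hF₀ hmargin hW hinit ht
    obtain ⟨hW₀, hg₀⟩ := ne_zero_and_ne_zero_of_inner_pos hpos
    rw [neg_ne_zero] at hg₀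
    exact ⟨hW₀, hg₀, div_pos hpos (by positivity)⟩
  · have htan (x y : EuclideanSpace ℝ (Fin k)) :
        (1 - (⟪x, -y⟫ / (‖x‖ * ‖y‖)) ^ 2) / (⟪x, -y⟫ / (‖x‖ * ‖y‖)) ^ 2 =
          Real.tan (InnerProductGeometry.angle x (-y)) ^ 2 := by
      rw [tan_sq_angle, norm_neg]
    have hα x : Function.invFun ℓ (∑ i, ℓ (p i x)) = ψ (∑ i, ℓ (p i x)) := hψ.invFun_eq (hF₀ x)
    simp only [htan, hα]
    exact setLIntegral_neg_deriv_mul_rpow_mul_tan_sq_lt_top (F := fun x => ∑ i, ℓ (p i x))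
      hL hψ hF hF₀ hmargin hW hinit
end

section
/- Let p_1,…,p_n : ℝ^k → ℝ be continuously differentiable and L-positively homogeneous (L > 0), let ℓ be the exponential or logistic loss, 𝓛(W) = Σ_i ℓ(p_i(W)), and let W : [0,∞) → ℝ^k be a C¹ gradient flow with dW_t/dt = −∇𝓛(W_t), 𝓛(W_0) < ℓ(0). Assume ‖W_t‖ → ∞, W_t/‖W_t‖ converges to some W̄, and α(W_t)/‖W_t‖^L → a for some a > 0. Define the dual variables q_i(t) = ℓ'(p_i(W_t))/ℓ'(α(W_t)). Then: lim_t p_i(W_t)/‖W_t‖^L = p_i(W̄) exists for every i with min_i p_i(W̄) = a; and every accumulation point q̄ of {q(t) : t ∈ ℕ} lies in the probability simplex Δ_n and satisfies Σ_i q̄_i·⟨W̄, ∇p_i(W̄)⟩ = a·L; in particular q̄ is supported on the indices i minimizing p_i(W̄). -/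
/-!
Both losses have exponential tails: `ℓ z ~ exp (-z)` and `-ℓ' z ~ ℓ z` as `z → ∞`. Since
`ℓ (α W) = ∑ ℓ (p_i W)`, we have `α ≤ p_i`, and the loss shares `ℓ (p_i) / ℓ (α)` form a point of
the simplex; by the second equivalence the dual variables `q_i` differ from these shares by `o(1)`,
so both have the same accumulation points. If `p_i(W̄) > a`, then
`p_i(W_t) - α(W_t) ≈ ‖W_t‖^L (p_i(W̄) - a) → ∞`, and by the first equivalence the share of `i`
tends to `0`. The shares sum to `1`, so some `p_i(W̄)` equals `a`, and accumulation points of `q`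
are supported on the minimisers. Euler's identity `⟪W̄, ∇p_i(W̄)⟫ = L p_i(W̄)` then gives the
last formula.
-/

open Filter Topology Asymptotics

open scoped RealInnerProductSpace

lemma Real.hasDerivAt_exp_neg (z : ℝ) :
    HasDerivAt (fun z => Real.exp (-z)) (-Real.exp (-z)) z := by
  simpa [Function.comp_def] using (Real.hasDerivAt_exp (-z)).comp z (hasDerivAt_neg z)

lemma Real.log_one_add_isEquivalent : (fun x => Real.log (1 + x)) ~[𝓝 0] id := by
  have h : HasDerivAt (fun x => Real.log (1 + x)) 1 0 := by
    simpa using ((hasDerivAt_id (0 : ℝ)).const_add 1).log (by norm_num)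
  have := hasDerivAt_iff_isLittleO.mp h
  simp only [add_zero, Real.log_one, sub_zero, smul_eq_mul, mul_one] at this
  exact this

lemma MapClusterPt.eq_of_tendsto {X ι : Type*} [TopologicalSpace X] [T2Space X] {l : Filter ι}
    {u : ι → X} {x y : X} (hx : MapClusterPt x l u) (hy : Tendsto u l (𝓝 y)) : x = y :=
  eq_of_nhds_neBot (hx.neBot.mono (inf_le_inf_left _ hy))

lemma MapClusterPt.of_tendsto_sub {G ι : Type*} [TopologicalSpace G] [AddCommGroup G]
    [IsTopologicalAddGroup G] {l : Filter ι} {u v : ι → G} {x : G} (hu : MapClusterPt x l u)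
    (huv : Tendsto (fun t => u t - v t) l (𝓝 0)) : MapClusterPt x l v := by
  obtain ⟨U, hUl, hUx⟩ := mapClusterPt_iff_ultrafilter.mp hu
  refine mapClusterPt_iff_ultrafilter.mpr ⟨U, hUl, ?_⟩
  simpa only [sub_sub_cancel, sub_zero] using hUx.sub (huv.mono_left hUl)

lemma Filter.Tendsto.atTop_of_div {ι : Type*} {l : Filter ι} {y s : ι → ℝ} {c : ℝ}
    (hs : Tendsto s l atTop) (hys : Tendsto (fun t => y t / s t) l (𝓝 c)) (hc : 0 < c) :
    Tendsto y l atTop := by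
  refine (hys.pos_mul_atTop hc hs).congr' ((hs.eventually_gt_atTop 0).mono fun t ht => ?_)
  exact div_mul_cancel₀ _ ht.ne'

section Homogeneous

variable {E : Type*} [NormedAddCommGroup E] [NormedSpace ℝ E] {f : E → ℝ} {L : ℝ}

lemma tendsto_div_norm_rpow_of_homogeneous {ι : Type*} {l : Filter ι}
    (hf : ∀ c : ℝ, 0 < c → ∀ x, f (c • x) = c ^ L * f x) {x : E} (hcont : ContinuousAt f x)
    {W : ι → E} (hW : ∀ᶠ t in l, 0 < ‖W t‖) (hdir : Tendsto (fun t => ‖W t‖⁻¹ • W t) l (𝓝 x)) :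
    Tendsto (fun t => f (W t) / ‖W t‖ ^ L) l (𝓝 (f x)) := by
  refine (hcont.tendsto.comp hdir).congr' (hW.mono fun t ht => ?_)
  rw [Function.comp_apply, hf _ (inv_pos.mpr ht), Real.inv_rpow ht.le, inv_mul_eq_div]

lemma fderiv_apply_self_of_homogeneous (hf : ∀ c : ℝ, 0 < c → ∀ x, f (c • x) = c ^ L * f x)
    {x : E} (hd : DifferentiableAt ℝ f x) : fderiv ℝ f x x = L * f x := by
  have hray : HasDerivAt (fun c : ℝ => f (c • x)) (fderiv ℝ f x x) 1 := by
    have hsmul : HasDerivAt (fun c : ℝ => c • x) x 1 := by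
      simpa using (hasDerivAt_id (1 : ℝ)).smul_const x
    have hfx : HasFDerivAt f (fderiv ℝ f x) ((1 : ℝ) • x) := by
      rw [one_smul]; exact hd.hasFDerivAt
    exact hfx.comp_hasDerivAt 1 hsmul
  have hpow : HasDerivAt (fun c : ℝ => c ^ L * f x) (L * f x) 1 := by
    simpa using (Real.hasDerivAt_rpow_const (x := 1) (p := L) (Or.inl one_ne_zero)).mul_const (f x)
  refine hray.unique (hpow.congr_of_eventuallyEq ?_)
  filter_upwards [eventually_gt_nhds zero_lt_one] with c hc using hf c hc x

lemma inner_gradient_self_of_homogeneous {F : Type*} [NormedAddCommGroup F]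
    [InnerProductSpace ℝ F] [CompleteSpace F] {f : F → ℝ}
    (hf : ∀ c : ℝ, 0 < c → ∀ x, f (c • x) = c ^ L * f x) {x : F} (hd : DifferentiableAt ℝ f x) :
    ⟪x, gradient f x⟫ = L * f x := by
  rw [real_inner_comm, gradient, InnerProductSpace.toDual_symm_apply]
  exact fderiv_apply_self_of_homogeneous hf hd

end Homogeneous

structure IsExpTailedLoss (ℓ : ℝ → ℝ) : Prop where
  strictAnti : StrictAnti ℓ
  range_eq : Set.range ℓ = Set.Ioi 0
  isEquivalent_exp_neg : ℓ ~[atTop] fun z => Real.exp (-z)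
  neg_deriv_isEquivalent : (fun z => -deriv ℓ z) ~[atTop] ℓ

lemma isExpTailedLoss_exp_neg : IsExpTailedLoss fun z => Real.exp (-z) where
  strictAnti _ _ h := Real.exp_lt_exp.mpr (neg_lt_neg h)
  range_eq := by rw [← Real.range_exp]; exact (neg_surjective (G := ℝ)).range_comp Real.exp
  isEquivalent_exp_neg := IsEquivalent.refl
  neg_deriv_isEquivalent := by
    simp only [fun z => (Real.hasDerivAt_exp_neg z).deriv, neg_neg]
    exact IsEquivalent.refl

lemma isExpTailedLoss_logistic : IsExpTailedLoss fun z => Real.log (1 + Real.exp (-z)) where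
  strictAnti _ _ h := Real.log_lt_log (by positivity) (by gcongr)
  range_eq := by
    ext y
    refine ⟨?_, fun hy => ⟨-Real.log (Real.exp y - 1), ?_⟩⟩
    · rintro ⟨z, rfl⟩
      exact Real.log_pos (by simp [Real.exp_pos])
    · have : 0 < Real.exp y - 1 := by simpa using Real.exp_lt_exp.mpr (Set.mem_Ioi.mp hy)
      simp [Real.exp_log this]
  isEquivalent_exp_neg :=
    Real.log_one_add_isEquivalent.comp_tendsto Real.tendsto_exp_neg_atTop_nhds_zero
  neg_deriv_isEquivalent := by
    refine IsEquivalent.trans ?_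
      (Real.log_one_add_isEquivalent.comp_tendsto Real.tendsto_exp_neg_atTop_nhds_zero).symm
    have hderiv (z : ℝ) : deriv (fun z => Real.log (1 + Real.exp (-z))) z
        = -Real.exp (-z) / (1 + Real.exp (-z)) :=
      (((Real.hasDerivAt_exp_neg z).const_add 1).log (by positivity)).deriv
    refine isEquivalent_of_tendsto_one ?_
    have hlim : Tendsto (fun z => (1 + Real.exp (-z))⁻¹) atTop (𝓝 1) := by
      simpa using (tendsto_const_nhds.add Real.tendsto_exp_neg_atTop_nhds_zero).inv₀
        (by norm_num : (1 : ℝ) + 0 ≠ 0)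
    refine hlim.congr fun z => ?_
    simp only [Pi.div_apply, Function.comp_apply, id, hderiv]
    field_simp

namespace IsExpTailedLoss

variable {ℓ : ℝ → ℝ} {κ ι : Type*} [Fintype κ] {l : Filter ι} {u v : ι → ℝ}

lemma pos (hℓ : IsExpTailedLoss ℓ) (z : ℝ) : 0 < ℓ z := by
  have h := Set.mem_range_self (f := ℓ) z
  rwa [hℓ.range_eq] at h

lemma apply_invFun (hℓ : IsExpTailedLoss ℓ) {y : ℝ} (hy : 0 < y) :
    ℓ (Function.invFun ℓ y) = y :=
  Function.invFun_eq (by rwa [← Set.mem_range, hℓ.range_eq])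

lemma le_of_apply_eq_sum (hℓ : IsExpTailedLoss ℓ) {A : ℝ} {P : κ → ℝ}
    (hsum : ℓ A = ∑ i, ℓ (P i)) (i : κ) : A ≤ P i := by
  refine hℓ.strictAnti.le_iff_ge.mp ?_
  rw [hsum]
  exact Finset.single_le_sum (fun j _ => (hℓ.pos (P j)).le) (Finset.mem_univ i)

lemma div_mem_stdSimplex (hℓ : IsExpTailedLoss ℓ) {A : ℝ} {P : κ → ℝ}
    (hsum : ℓ A = ∑ i, ℓ (P i)) : (fun i => ℓ (P i) / ℓ A) ∈ stdSimplex ℝ κ :=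
  ⟨fun _ => div_nonneg (hℓ.pos _).le (hℓ.pos _).le,
    by rw [← Finset.sum_div, ← hsum, div_self (hℓ.pos A).ne']⟩

lemma tendsto_div_zero (hℓ : IsExpTailedLoss ℓ) (hv : Tendsto v l atTop)
    (huv : Tendsto (fun t => u t - v t) l atTop) :
    Tendsto (fun t => ℓ (u t) / ℓ (v t)) l (𝓝 0) := by
  have hu : Tendsto u l atTop := by simpa using huv.atTop_add_atTop hv
  have hequiv : (fun t => ℓ (u t) / ℓ (v t)) ~[l] fun t => Real.exp (-(u t - v t)) := by
    refine ((hℓ.isEquivalent_exp_neg.comp_tendsto hu).div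
      (hℓ.isEquivalent_exp_neg.comp_tendsto hv)).congr_right (Eventually.of_forall fun t => ?_)
    simp only [Function.comp_apply, Pi.div_apply, ← Real.exp_sub]
    ring_nf
  exact hequiv.symm.tendsto_nhds (Real.tendsto_exp_neg_atTop_nhds_zero.comp huv)

lemma tendsto_deriv_div_sub_div (hℓ : IsExpTailedLoss ℓ) (hv : Tendsto v l atTop)
    (hvu : ∀ᶠ t in l, v t ≤ u t) :
    Tendsto (fun t => deriv ℓ (u t) / deriv ℓ (v t) - ℓ (u t) / ℓ (v t)) l (𝓝 0) := by
  have hu : Tendsto u l atTop := tendsto_atTop_mono' l hvu hv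
  have hequiv : (fun t => deriv ℓ (u t) / deriv ℓ (v t)) ~[l] fun t => ℓ (u t) / ℓ (v t) := by
    simpa only [Function.comp_def, Pi.div_def, neg_div_neg_eq] using
      (hℓ.neg_deriv_isEquivalent.comp_tendsto hu).div (hℓ.neg_deriv_isEquivalent.comp_tendsto hv)
  have hbdd : (fun t => ℓ (u t) / ℓ (v t)) =O[l] fun _ => (1 : ℝ) := by
    refine IsBigO.of_bound 1 (hvu.mono fun t ht => ?_)
    rw [norm_one, mul_one, Real.norm_of_nonneg (div_pos (hℓ.pos _) (hℓ.pos _)).le,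
      div_le_one (hℓ.pos _)]
    exact hℓ.strictAnti.antitone ht
  exact (isLittleO_one_iff ℝ).mp (hequiv.isLittleO.trans_isBigO hbdd)

variable {P : κ → ι → ℝ} {A N : ι → ℝ} {π : κ → ℝ} {a : ℝ}

lemma le_of_tendsto_div [l.NeBot] (hℓ : IsExpTailedLoss ℓ) (hsum : ∀ t, ℓ (A t) = ∑ i, ℓ (P i t))
    (hN : Tendsto N l atTop) {i : κ} (hP : Tendsto (fun t => P i t / N t) l (𝓝 (π i)))
    (hA : Tendsto (fun t => A t / N t) l (𝓝 a)) : a ≤ π i :=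
  le_of_tendsto_of_tendsto hA hP ((hN.eventually_gt_atTop 0).mono fun t ht =>
    div_le_div_of_nonneg_right (hℓ.le_of_apply_eq_sum (hsum t) i) ht.le)

lemma tendsto_div_zero_of_tendsto_div (hℓ : IsExpTailedLoss ℓ) {b : ℝ}
    (hN : Tendsto N l atTop) (hu : Tendsto (fun t => u t / N t) l (𝓝 b))
    (hv : Tendsto (fun t => v t / N t) l (𝓝 a)) (ha : 0 < a) (hab : a < b) :
    Tendsto (fun t => ℓ (u t) / ℓ (v t)) l (𝓝 0) := by
  refine hℓ.tendsto_div_zero (hN.atTop_of_div hv ha) (hN.atTop_of_div ?_ (sub_pos.mpr hab))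
  simpa only [sub_div] using hu.sub hv

lemma iInf_eq_of_tendsto_div [l.NeBot] [Nonempty κ] (hℓ : IsExpTailedLoss ℓ)
    (hsum : ∀ t, ℓ (A t) = ∑ i, ℓ (P i t)) (hN : Tendsto N l atTop)
    (hP : ∀ i, Tendsto (fun t => P i t / N t) l (𝓝 (π i)))
    (hA : Tendsto (fun t => A t / N t) l (𝓝 a)) (ha : 0 < a) : ⨅ i, π i = a := by
  obtain ⟨i₀, hi₀⟩ := exists_eq_ciInf_of_finite (f := π)
  rw [← hi₀]
  refine le_antisymm (not_lt.mp fun hlt => ?_) (hℓ.le_of_tendsto_div hsum hN (hP i₀) hA)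
  have hmin : ∀ i, a < π i := fun i =>
    hlt.trans_le (hi₀ ▸ ciInf_le (Finite.bddBelow_range π) i)
  have hzero : Tendsto (fun t => ∑ i, ℓ (P i t) / ℓ (A t)) l (𝓝 0) := by
    simpa using tendsto_finsetSum Finset.univ fun i _ =>
      hℓ.tendsto_div_zero_of_tendsto_div hN (hP i) hA ha (hmin i)
  have hone : ∀ t, ∑ i, ℓ (P i t) / ℓ (A t) = 1 := fun t => (hℓ.div_mem_stdSimplex (hsum t)).2
  simp only [hone] at hzero
  exact one_ne_zero (tendsto_nhds_unique tendsto_const_nhds hzero)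

lemma mem_stdSimplex_of_mapClusterPt [l.NeBot] (hℓ : IsExpTailedLoss ℓ)
    (hsum : ∀ t, ℓ (A t) = ∑ i, ℓ (P i t)) (hN : Tendsto N l atTop)
    (hP : ∀ i, Tendsto (fun t => P i t / N t) l (𝓝 (π i)))
    (hA : Tendsto (fun t => A t / N t) l (𝓝 a)) (ha : 0 < a) {qbar : κ → ℝ}
    (hq : MapClusterPt qbar l fun t i => deriv ℓ (P i t) / deriv ℓ (A t)) :
    qbar ∈ stdSimplex ℝ κ ∧ ∀ i, qbar i ≠ 0 → π i = a := by
  have hAtop : Tendsto A l atTop := hN.atTop_of_div hA ha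
  have hw : MapClusterPt qbar l fun t i => ℓ (P i t) / ℓ (A t) :=
    hq.of_tendsto_sub <| tendsto_pi_nhds.mpr fun i => hℓ.tendsto_deriv_div_sub_div hAtop
      (Eventually.of_forall fun t => hℓ.le_of_apply_eq_sum (hsum t) i)
  refine ⟨isClosed_stdSimplex ℝ κ |>.mem_of_mapClusterPt hw
    (Eventually.of_forall fun t => hℓ.div_mem_stdSimplex (hsum t)), fun i hi => ?_⟩
  refine le_antisymm (not_lt.mp fun hlt => hi ?_) (hℓ.le_of_tendsto_div hsum hN (hP i) hA)
  exact (hw.continuousAt_comp (continuous_apply i).continuousAt).eq_of_tendsto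
    (hℓ.tendsto_div_zero_of_tendsto_div hN (hP i) hA ha hlt)

end IsExpTailedLoss

theorem statement_16_general
    (n k : ℕ) (hn : 0 < n) (L : ℝ) (hL : 0 < L)
    (p : Fin n → EuclideanSpace ℝ (Fin k) → ℝ)
    (hp : ∀ i, ContDiff ℝ 1 (p i))
    (hhom : ∀ i (c : ℝ), 0 < c → ∀ V, p i (c • V) = c ^ L * p i V)
    (ℓ : ℝ → ℝ)
    (hℓ : ℓ = (fun z => Real.exp (-z)) ∨ ℓ = fun z => Real.log (1 + Real.exp (-z)))
    (𝓛 : EuclideanSpace ℝ (Fin k) → ℝ)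
    (h𝓛 : 𝓛 = fun V => ∑ i, ℓ (p i V))
    (α : EuclideanSpace ℝ (Fin k) → ℝ)
    (hα : α = fun V => Function.invFun ℓ (𝓛 V))
    (W : ℝ → EuclideanSpace ℝ (Fin k))
    (hWnorm : Tendsto (fun t => ‖W t‖) atTop atTop)
    (Wbar : EuclideanSpace ℝ (Fin k))
    (hdir : Tendsto (fun t => ‖W t‖⁻¹ • W t) atTop (nhds Wbar))
    (a : ℝ) (ha : 0 < a)
    (halpha : Tendsto (fun t => α (W t) / ‖W t‖ ^ L) atTop (nhds a))
    (q : Fin n → ℝ → ℝ)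
    (hq : ∀ i t, q i t = deriv ℓ (p i (W t)) / deriv ℓ (α (W t))) :
    (∀ i, Tendsto (fun t => p i (W t) / ‖W t‖ ^ L) atTop (nhds (p i Wbar))) ∧
    (⨅ i, p i Wbar) = a ∧
    ∀ qbar : Fin n → ℝ,
      MapClusterPt qbar atTop (fun t : ℕ => fun i => q i t) →
        (∀ i, 0 ≤ qbar i) ∧ (∑ i, qbar i) = 1 ∧
        (∑ i, qbar i * ⟪Wbar, gradient (p i) Wbar⟫) = a * L ∧
        (∀ i, qbar i ≠ 0 → p i Wbar = a) := by
  have hloss : IsExpTailedLoss ℓ := by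
    rcases hℓ with rfl | rfl
    exacts [isExpTailedLoss_exp_neg, isExpTailedLoss_logistic]
  have : Nonempty (Fin n) := Fin.pos_iff_nonempty.mp hn
  have hsum (t : ℝ) : ℓ (α (W t)) = ∑ i, ℓ (p i (W t)) := by
    subst hα h𝓛
    exact hloss.apply_invFun (Finset.sum_pos (fun i _ => hloss.pos _) Finset.univ_nonempty)
  have hN : Tendsto (fun t => ‖W t‖ ^ L) atTop atTop := (tendsto_rpow_atTop hL).comp hWnorm
  have hmargin (i : Fin n) : Tendsto (fun t => p i (W t) / ‖W t‖ ^ L) atTop (𝓝 (p i Wbar)) :=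
    tendsto_div_norm_rpow_of_homogeneous (hhom i) (hp i).continuous.continuousAt
      (hWnorm.eventually_gt_atTop 0) hdir
  refine ⟨hmargin, hloss.iInf_eq_of_tendsto_div hsum hN hmargin halpha ha, fun qbar hclus => ?_⟩
  obtain rfl : q = fun i t => deriv ℓ (p i (W t)) / deriv ℓ (α (W t)) := funext₂ hq
  obtain ⟨⟨hnonneg, hone⟩, hsupp⟩ := hloss.mem_stdSimplex_of_mapClusterPt hsum hN hmargin halpha ha
    (hclus.of_comp tendsto_natCast_atTop_atTop)
  refine ⟨hnonneg, hone, ?_, hsupp⟩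
  calc ∑ i, qbar i * ⟪Wbar, gradient (p i) Wbar⟫ = ∑ i, qbar i * (L * a) := by
        refine Finset.sum_congr rfl fun i _ => ?_
        rcases eq_or_ne (qbar i) 0 with h | h
        · simp [h]
        · rw [inner_gradient_self_of_homogeneous (hhom i)
            ((hp i).differentiable one_ne_zero).differentiableAt, hsupp i h]
    _ = a * L := by rw [← Finset.sum_mul, hone, one_mul, mul_comm]

theorem statement_16
    (n k : ℕ) (hn : 0 < n) (L : ℝ) (hL : 0 < L)
    (p : Fin n → EuclideanSpace ℝ (Fin k) → ℝ)
    (hp : ∀ i, ContDiff ℝ 1 (p i))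
    (hhom : ∀ i (c : ℝ), 0 < c → ∀ V, p i (c • V) = c ^ L * p i V)
    (ℓ : ℝ → ℝ)
    (hℓ : ℓ = (fun z => Real.exp (-z)) ∨ ℓ = fun z => Real.log (1 + Real.exp (-z)))
    (𝓛 : EuclideanSpace ℝ (Fin k) → ℝ)
    (h𝓛 : 𝓛 = fun V => ∑ i, ℓ (p i V))
    (α : EuclideanSpace ℝ (Fin k) → ℝ)
    (hα : α = fun V => Function.invFun ℓ (𝓛 V))
    (W : ℝ → EuclideanSpace ℝ (Fin k))
    (hW : ∀ t : ℝ, 0 ≤ t → HasDerivAt W (-gradient 𝓛 (W t)) t)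
    (hinit : 𝓛 (W 0) < ℓ 0)
    (hWnorm : Tendsto (fun t => ‖W t‖) atTop atTop)
    (Wbar : EuclideanSpace ℝ (Fin k))
    (hdir : Tendsto (fun t => ‖W t‖⁻¹ • W t) atTop (nhds Wbar))
    (a : ℝ) (ha : 0 < a)
    (halpha : Tendsto (fun t => α (W t) / ‖W t‖ ^ L) atTop (nhds a))
    (q : Fin n → ℝ → ℝ)
    (hq : ∀ i t, q i t = deriv ℓ (p i (W t)) / deriv ℓ (α (W t))) :
    (∀ i, Tendsto (fun t => p i (W t) / ‖W t‖ ^ L) atTop (nhds (p i Wbar))) ∧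
    (⨅ i, p i Wbar) = a ∧
    ∀ qbar : Fin n → ℝ,
      MapClusterPt qbar atTop (fun t : ℕ => fun i => q i t) →
        (∀ i, 0 ≤ qbar i) ∧ (∑ i, qbar i) = 1 ∧
        (∑ i, qbar i * ⟪Wbar, gradient (p i) Wbar⟫) = a * L ∧
        (∀ i, qbar i ≠ 0 → p i Wbar = a) :=
  statement_16_general n k hn L hL p hp hhom ℓ hℓ 𝓛 h𝓛 α hα W hWnorm Wbar hdir a ha halpha q hq
end

section
/- Let p_1,…,p_n : ℝ^k → ℝ be continuously differentiable and L-positively homogeneous (L > 0), let ℓ be the exponential or logistic loss, and 𝓛(W) = Σ_i ℓ(p_i(W)). Let W : [0,∞) → ℝ^k be any curve with 𝓛(W_t) < ℓ(0) for all t, ‖W_t‖ → ∞, and α(W_t)/‖W_t‖^L → a for some a ∈ ℝ, where α(W) = ℓ^{−1}(𝓛(W)). Then lim_{t→∞} ⟨∇α(W_t), W_t⟩/‖W_t‖^L = a·L. -/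
/-!
Euler's identity `⟪∇pᵢ(W), W⟫ = L pᵢ(W)` and the chain rule give `⟪∇α(W), W⟫ = L β(W)` with
`β = ∑ᵢ ℓ'(pᵢ) pᵢ / ℓ'(α)`. For both losses `0 ≤ β - α ≤ C` with `C` depending only on `n`:
for the exponential loss `β - α` is the entropy of the distribution `e^{-pᵢ} / 𝓛`; for the
logistic loss, writing `xᵢ = e^{-pᵢ}` and `T = e^{-α}` (so that `∏ (1 + xᵢ) = 1 + T < 2`), it
splits into entropy-like terms `-(xᵢ/T) log (xᵢ/T)` and a term controlled by
`T/(1+T) ≤ ∑ xᵢ/(1+xᵢ) ≤ T`. Dividing `⟪∇α, W⟫ - L α = O(1)` by `‖W‖^L → ∞` gives the limit.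
-/

open Filter Real

open scoped RealInnerProductSpace Topology

theorem fderiv_apply_self_of_posHomogeneous {E F : Type*} [NormedAddCommGroup E]
    [NormedSpace ℝ E] [NormedAddCommGroup F] [NormedSpace ℝ F] {f : E → F} {L : ℝ} {x : E}
    (hf : DifferentiableAt ℝ f x) (hhom : ∀ c : ℝ, 0 < c → f (c • x) = c ^ L • f x) :
    fderiv ℝ f x x = L • f x := by
  have hline : HasDerivAt (fun c : ℝ => f (c • x)) (fderiv ℝ f x x) 1 := by
    have hsmul : HasDerivAt (fun c : ℝ => c • x) x 1 := by
      simpa using (hasDerivAt_id (1 : ℝ)).smul_const x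
    have hf' : HasFDerivAt f (fderiv ℝ f x) ((1 : ℝ) • x) := by
      rw [one_smul]
      exact hf.hasFDerivAt
    exact hf'.comp_hasDerivAt 1 hsmul
  have hpow : HasDerivAt (fun c : ℝ => c ^ L • f x) (L • f x) 1 := by
    simpa using (hasDerivAt_rpow_const (x := 1) (p := L) (Or.inl one_ne_zero)).smul_const (f x)
  have heq : (fun c : ℝ => c ^ L • f x) =ᶠ[𝓝 1] fun c => f (c • x) := by
    filter_upwards [Ioi_mem_nhds one_pos] with c hc using (hhom c hc).symm
  exact hline.unique (hpow.congr_of_eventuallyEq heq.symm)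

theorem inner_gradient_comp_sum_self {E ι : Type*} [NormedAddCommGroup E]
    [InnerProductSpace ℝ E] [CompleteSpace E] [Fintype ι] {p : ι → E → ℝ} {ℓ φ : ℝ → ℝ}
    {ℓ' : ι → ℝ} {φ' L : ℝ} {x : E} (hp : ∀ i, DifferentiableAt ℝ (p i) x)
    (hhom : ∀ i, ∀ c : ℝ, 0 < c → p i (c • x) = c ^ L * p i x)
    (hℓ : ∀ i, HasDerivAt ℓ (ℓ' i) (p i x)) (hφ : HasDerivAt φ φ' (∑ i, ℓ (p i x))) :
    ⟪gradient (fun y => φ (∑ i, ℓ (p i y))) x, x⟫ = L * (φ' * ∑ i, ℓ' i * p i x) := by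
  have hderiv : HasFDerivAt (fun y => φ (∑ i, ℓ (p i y)))
      (φ' • ∑ i, ℓ' i • fderiv ℝ (p i) x) x :=
    hφ.comp_hasFDerivAt x
      (HasFDerivAt.fun_sum fun i _ => (hℓ i).comp_hasFDerivAt x (hp i).hasFDerivAt)
  have heuler i : fderiv ℝ (p i) x x = L * p i x :=
    fderiv_apply_self_of_posHomogeneous (hp i) (hhom i)
  rw [inner_gradient_left, hderiv.fderiv]
  simp [heuler, Finset.mul_sum, mul_left_comm]

theorem tendsto_div_of_abs_sub_mul_le {α : Type*} {l : Filter α} {f g N : α → ℝ} {a L C : ℝ}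
    (hN : Tendsto N l atTop) (hg : Tendsto (fun t => g t / N t) l (𝓝 a))
    (hfg : ∀ᶠ t in l, |f t - L * g t| ≤ C) : Tendsto (fun t => f t / N t) l (𝓝 (a * L)) := by
  have hrem : Tendsto (fun t => (f t - L * g t) / N t) l (𝓝 0) := by
    refine squeeze_zero_norm' ?_ ((tendsto_const_nhds (x := C)).div_atTop hN)
    filter_upwards [hfg, hN.eventually_gt_atTop 0] with t ht hNt
    rw [norm_div, Real.norm_eq_abs, Real.norm_of_nonneg hNt.le]
    exact div_le_div_of_nonneg_right ht hNt.le
  have hsum := hrem.add (hg.const_mul L)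
  rw [zero_add, mul_comm L] at hsum
  refine hsum.congr fun t => ?_
  ring

theorem Finset.one_sub_prod_one_sub_le_sum {ι R : Type*} [CommRing R] [LinearOrder R]
    [IsStrictOrderedRing R] (s : Finset ι) {a : ι → R} (h0 : ∀ i ∈ s, 0 ≤ a i)
    (h1 : ∀ i ∈ s, a i ≤ 1) : 1 - ∏ i ∈ s, (1 - a i) ≤ ∑ i ∈ s, a i := by
  induction s using Finset.cons_induction with
  | empty => simp
  | cons j s hj ih =>
    simp only [Finset.forall_mem_cons] at h0 h1
    have hP0 : 0 ≤ ∏ i ∈ s, (1 - a i) :=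
      Finset.prod_nonneg fun i hi => sub_nonneg.2 (h1.2 i hi)
    have hP1 : ∏ i ∈ s, (1 - a i) ≤ 1 :=
      Finset.prod_le_one (fun i hi => sub_nonneg.2 (h1.2 i hi)) fun i hi => by
        linarith [h0.2 i hi]
    rw [Finset.prod_cons, Finset.sum_cons]
    nlinarith [ih h0.2 h1.2, mul_le_mul_of_nonneg_left hP1 h0.1]

theorem div_one_add_eq_one_sub_inv {K : Type*} [Field K] {x : K} (hx : 1 + x ≠ 0) :
    x / (1 + x) = 1 - (1 + x)⁻¹ := by
  field_simp
  ring

section ProdOneAdd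

variable {ι : Type*} [Fintype ι] {x : ι → ℝ} {T : ℝ}

theorem le_of_prod_one_add_eq (hx : ∀ i, 0 ≤ x i) (hprod : ∏ i, (1 + x i) = 1 + T) (i : ι) :
    x i ≤ T := by
  have := Finset.prod_le_prod_of_subset_of_one_le (f := fun j => 1 + x j)
    (Finset.subset_univ {i}) (fun j _ => by linarith [hx j]) (fun j _ _ => by linarith [hx j])
  rw [Finset.prod_singleton, hprod] at this
  linarith

theorem nonneg_of_prod_one_add_eq (hx : ∀ i, 0 ≤ x i) (hprod : ∏ i, (1 + x i) = 1 + T) :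
    0 ≤ T := by
  have := Finset.one_le_prod (s := Finset.univ) (f := fun j => 1 + x j) fun j _ => by
    linarith [hx j]
  linarith

theorem div_one_add_le_sum_div_one_add (hx : ∀ i, 0 ≤ x i) (hprod : ∏ i, (1 + x i) = 1 + T) :
    T / (1 + T) ≤ ∑ i, x i / (1 + x i) := by
  have hw i : x i / (1 + x i) = 1 - (1 + x i)⁻¹ :=
    div_one_add_eq_one_sub_inv (by linarith [hx i])
  have hT := nonneg_of_prod_one_add_eq hx hprod
  have := Finset.univ.one_sub_prod_one_sub_le_sum (a := fun i => x i / (1 + x i))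
    (fun i _ => div_nonneg (hx i) (by linarith [hx i]))
    (fun i _ => (div_le_one (by linarith [hx i])).2 (by linarith))
  simp only [hw, sub_sub_cancel, Finset.prod_inv_distrib, hprod] at this
  rwa [div_one_add_eq_one_sub_inv (by linarith), Finset.sum_congr rfl fun i _ => hw i]

theorem sum_div_one_add_le (hx : ∀ i, 0 ≤ x i) (hprod : ∏ i, (1 + x i) = 1 + T) :
    ∑ i, x i / (1 + x i) ≤ T :=
  calc ∑ i, x i / (1 + x i) ≤ ∑ i, log (1 + x i) := by
        gcongr with i
        rw [div_one_add_eq_one_sub_inv (by linarith [hx i])]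
        exact one_sub_inv_le_log_of_pos (by linarith [hx i])
    _ = log (1 + T) := by rw [← hprod, log_prod fun i _ => by linarith [hx i]]
    _ ≤ T := by
        have hT := nonneg_of_prod_one_add_eq hx hprod
        linarith [log_le_sub_one_of_pos (x := 1 + T) (by linarith)]

end ProdOneAdd

theorem exp_margin_gap_mem_Icc {ι : Type*} [Fintype ι] [Nonempty ι] {x : ι → ℝ}
    (hx : ∀ i, 0 < x i) :
    (∑ i, x i * -log (x i)) / ∑ i, x i + log (∑ i, x i) ∈ Set.Icc (0 : ℝ) (Fintype.card ι) := by
  set S := ∑ i, x i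
  have hS : 0 < S := Finset.sum_pos (fun i _ => hx i) Finset.univ_nonempty
  have hq0 i : 0 ≤ x i / S := div_nonneg (hx i).le hS.le
  have hq1 i : x i / S ≤ 1 :=
    (div_le_one hS).2 (Finset.single_le_sum (fun j _ => (hx j).le) (Finset.mem_univ i))
  have hentropy : (∑ i, x i * -log (x i)) / S + log S = ∑ i, negMulLog (x i / S) :=
    calc (∑ i, x i * -log (x i)) / S + log S
        = (∑ i, x i * -log (x i)) / S + (∑ i, x i) / S * log S := by
          rw [div_self hS.ne', one_mul]
      _ = ∑ i, (x i * -log (x i) / S + x i / S * log S) := by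
        rw [Finset.sum_add_distrib, Finset.sum_div, Finset.sum_div, Finset.sum_mul]
      _ = ∑ i, negMulLog (x i / S) := by
        refine Finset.sum_congr rfl fun i _ => ?_
        rw [negMulLog, log_div (hx i).ne' hS.ne']
        ring
  rw [hentropy]
  refine ⟨Finset.sum_nonneg fun i _ => negMulLog_nonneg (hq0 i) (hq1 i), ?_⟩
  simpa using Finset.sum_le_card_nsmul Finset.univ (fun i => negMulLog (x i / S)) 1 fun i _ => by
    linarith [negMulLog_le_one_sub_self (hq0 i), hq0 i]

theorem logistic_gap_spread_term_mem_Icc {x T : ℝ} (hx : 0 < x) (hxT : x ≤ T) :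
    (1 + T) / T * (x / (1 + x)) * -log (x / T) ∈ Set.Icc 0 (1 + T) := by
  have hT : 0 < T := hx.trans_le hxT
  have hu0 : 0 ≤ x / T := div_nonneg hx.le hT.le
  have hlogu : 0 ≤ -log (x / T) := neg_nonneg.2 (log_nonpos hu0 ((div_le_one hT).2 hxT))
  refine ⟨mul_nonneg (by positivity) hlogu, ?_⟩
  calc (1 + T) / T * (x / (1 + x)) * -log (x / T)
      ≤ (1 + T) / T * x * -log (x / T) := by
        gcongr
        exact div_le_self hx.le (by linarith)
    _ = (1 + T) * negMulLog (x / T) := by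
        rw [negMulLog]
        field_simp
    _ ≤ (1 + T) * (1 - x / T) := by
        gcongr
        exact negMulLog_le_one_sub_self hu0
    _ ≤ 1 + T := by nlinarith

theorem logistic_gap_mass_term_mem_Icc {s T : ℝ} (hT : 0 < T) (hT1 : T ≤ 1)
    (hs : s ∈ Set.Icc (T / (1 + T)) T) : -log T * ((1 + T) / T * s - 1) ∈ Set.Icc 0 1 := by
  have hlogT : 0 ≤ -log T := neg_nonneg.2 (log_nonpos hT.le hT1)
  refine ⟨mul_nonneg hlogT ?_, ?_⟩
  · rw [sub_nonneg, div_mul_eq_mul_div, one_le_div hT, ← div_le_iff₀' (by linarith)]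
    exact hs.1
  · calc -log T * ((1 + T) / T * s - 1) ≤ -log T * ((1 + T) / T * T - 1) := by
          gcongr
          exact hs.2
      _ = negMulLog T := by
          rw [negMulLog]
          field_simp
          ring
      _ ≤ 1 := by linarith [negMulLog_le_one_sub_self hT.le]

theorem logistic_margin_gap_mem_Icc {ι : Type*} [Fintype ι] [Nonempty ι] {x : ι → ℝ} {T : ℝ}
    (hx : ∀ i, 0 < x i) (hprod : ∏ i, (1 + x i) = 1 + T) (hT1 : T ≤ 1) :
    (1 + T) / T * ∑ i, x i / (1 + x i) * -log (x i) + log T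
      ∈ Set.Icc (0 : ℝ) (2 * Fintype.card ι + 1) := by
  have hxT := le_of_prod_one_add_eq (fun i => (hx i).le) hprod
  have hT : 0 < T := (hx (Classical.arbitrary ι)).trans_le (hxT _)
  -- measure each `x i` relative to `T = exp (-α)`, i.e. each margin relative to `α`
  have hsplit : (1 + T) / T * ∑ i, x i / (1 + x i) * -log (x i) + log T
      = ∑ i, (1 + T) / T * (x i / (1 + x i)) * -log (x i / T)
        + -log T * ((1 + T) / T * ∑ i, x i / (1 + x i) - 1) := by
    have : ∑ i, x i / (1 + x i) * -log (x i)
        = ∑ i, x i / (1 + x i) * -log (x i / T) + (∑ i, x i / (1 + x i)) * -log T := by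
      rw [Finset.sum_mul, ← Finset.sum_add_distrib]
      refine Finset.sum_congr rfl fun i _ => ?_
      rw [log_div (hx i).ne' hT.ne']
      ring
    rw [this, mul_add, Finset.mul_sum]
    simp only [mul_assoc]
    ring
  have hspread i := logistic_gap_spread_term_mem_Icc (hx i) (hxT i)
  obtain ⟨hmass0, hmass1⟩ := logistic_gap_mass_term_mem_Icc hT hT1
    ⟨div_one_add_le_sum_div_one_add (fun i => (hx i).le) hprod,
      sum_div_one_add_le (fun i => (hx i).le) hprod⟩
  have hsum0 := Finset.sum_nonneg fun i (_ : i ∈ Finset.univ) => (hspread i).1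
  have hsum2 := Finset.sum_le_card_nsmul Finset.univ
    (fun i => (1 + T) / T * (x i / (1 + x i)) * -log (x i / T)) 2 fun i _ =>
      (hspread i).2.trans (by linarith)
  simp only [Finset.card_univ, nsmul_eq_mul] at hsum2
  rw [hsplit]
  constructor <;> linarith

theorem invFun_exp_neg {y : ℝ} (hy : 0 < y) :
    Function.invFun (fun z => exp (-z)) y = -log y := by
  have hinj : Function.Injective fun z : ℝ => exp (-z) := fun a b h =>
    neg_injective (exp_injective h)
  simpa [exp_log hy] using Function.leftInverse_invFun hinj (-log y)

theorem invFun_log_one_add_exp_neg {y : ℝ} (hy : 0 < y) :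
    Function.invFun (fun z => log (1 + exp (-z))) y = -log (exp y - 1) := by
  have hinj : Function.Injective fun z : ℝ => log (1 + exp (-z)) :=
    StrictAnti.injective fun a b hab => log_lt_log (by positivity) (by gcongr)
  have hT : 0 < exp y - 1 := by linarith [add_one_lt_exp hy.ne']
  simpa [exp_log hT] using Function.leftInverse_invFun hinj (-log (exp y - 1))

section Margins

variable {E ι : Type*} [NormedAddCommGroup E] [InnerProductSpace ℝ E] [CompleteSpace E]
  [Fintype ι] [Nonempty ι] {p : ι → E → ℝ} {L : ℝ} {x : E}

theorem abs_inner_gradient_sub_mul_expMargin_le (hL : 0 ≤ L)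
    (hp : ∀ i, DifferentiableAt ℝ (p i) x)
    (hhom : ∀ i, ∀ c : ℝ, 0 < c → p i (c • x) = c ^ L * p i x) :
    |⟪gradient (fun y => -log (∑ i, exp (-p i y))) x, x⟫ - L * -log (∑ i, exp (-p i x))|
      ≤ L * Fintype.card ι := by
  have hS : 0 < ∑ i, exp (-p i x) :=
    Finset.sum_pos (fun i _ => exp_pos _) Finset.univ_nonempty
  rw [inner_gradient_comp_sum_self (ℓ := fun z => exp (-z)) (φ := fun y => -log y) hp hhom
    (fun i => (hasDerivAt_neg (p i x)).exp) (hasDerivAt_log hS.ne').neg]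
  obtain ⟨h0, h1⟩ := exp_margin_gap_mem_Icc fun i => exp_pos (-p i x)
  simp only [log_exp, neg_neg] at h0 h1
  have hβ : ∑ i, exp (-p i x) * -1 * p i x = -∑ i, exp (-p i x) * p i x := by
    simp [← Finset.sum_neg_distrib]
  rw [hβ, neg_mul_neg, inv_mul_eq_div, show ∀ a b : ℝ, L * a - L * -b = L * (a + b) by
    intros; ring, abs_of_nonneg (mul_nonneg hL h0)]
  exact mul_le_mul_of_nonneg_left h1 hL

theorem abs_inner_gradient_sub_mul_logisticMargin_le (hL : 0 ≤ L)
    (hp : ∀ i, DifferentiableAt ℝ (p i) x)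
    (hhom : ∀ i, ∀ c : ℝ, 0 < c → p i (c • x) = c ^ L * p i x)
    (hloss : ∑ i, log (1 + exp (-p i x)) < log 2) :
    |⟪gradient (fun y => -log (exp (∑ i, log (1 + exp (-p i y))) - 1)) x, x⟫
        - L * -log (exp (∑ i, log (1 + exp (-p i x))) - 1)|
      ≤ L * (2 * Fintype.card ι + 1) := by
  set S := ∑ i, log (1 + exp (-p i x))
  have hprod : ∏ i, (1 + exp (-p i x)) = 1 + (exp S - 1) := by
    rw [add_sub_cancel, exp_sum]
    exact Finset.prod_congr rfl fun i _ => (exp_log (by positivity)).symm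
  have hT : 0 < exp S - 1 := by
    have : 0 < S := Finset.sum_pos (fun i _ => log_pos (by linarith [exp_pos (-p i x)]))
      Finset.univ_nonempty
    linarith [add_one_lt_exp this.ne']
  have hT1 : exp S - 1 ≤ 1 := by
    have := exp_lt_exp.2 hloss
    rw [exp_log two_pos] at this
    linarith
  rw [inner_gradient_comp_sum_self (ℓ := fun z => log (1 + exp (-z)))
    (φ := fun y => -log (exp y - 1)) hp hhom
    (fun i => ((hasDerivAt_neg (p i x)).exp.const_add 1).log (by positivity))
    (((hasDerivAt_exp S).sub_const 1).log hT.ne').neg]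
  obtain ⟨h0, h1⟩ := logistic_margin_gap_mem_Icc (fun i => exp_pos (-p i x)) hprod hT1
  simp only [log_exp, neg_neg, add_sub_cancel] at h0 h1
  have hβ : ∑ i, exp (-p i x) * -1 / (1 + exp (-p i x)) * p i x
      = -∑ i, exp (-p i x) / (1 + exp (-p i x)) * p i x := by
    simp [← Finset.sum_neg_distrib, neg_div]
  rw [hβ, neg_mul_neg, show ∀ a b : ℝ, L * a - L * -b = L * (a + b) by intros; ring,
    abs_of_nonneg (mul_nonneg hL h0)]
  exact mul_le_mul_of_nonneg_left h1 hL

end Margins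

theorem statement_17
    (n k : ℕ) (hn : 0 < n) (L : ℝ) (hL : 0 < L)
    (p : Fin n → EuclideanSpace ℝ (Fin k) → ℝ)
    (hp : ∀ i, ContDiff ℝ 1 (p i))
    (hhom : ∀ i (c : ℝ), 0 < c → ∀ W, p i (c • W) = c ^ L * p i W)
    (ℓ : ℝ → ℝ)
    (hℓ : ℓ = (fun z => Real.exp (-z)) ∨ ℓ = fun z => Real.log (1 + Real.exp (-z)))
    (𝓛 : EuclideanSpace ℝ (Fin k) → ℝ)
    (h𝓛 : 𝓛 = fun W => ∑ i, ℓ (p i W))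
    (α : EuclideanSpace ℝ (Fin k) → ℝ)
    (hα : α = fun W => Function.invFun ℓ (𝓛 W))
    (W : ℝ → EuclideanSpace ℝ (Fin k))
    (hWloss : ∀ t : ℝ, 0 ≤ t → 𝓛 (W t) < ℓ 0)
    (hWnorm : Tendsto (fun t => ‖W t‖) atTop atTop)
    (a : ℝ)
    (ha : Tendsto (fun t => α (W t) / ‖W t‖ ^ L) atTop (nhds a)) :
    Tendsto (fun t => ⟪gradient α (W t), W t⟫ / ‖W t‖ ^ L) atTop (nhds (a * L)) := by
  have : Nonempty (Fin n) := ⟨⟨0, hn⟩⟩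
  have hnormL : Tendsto (fun t => ‖W t‖ ^ L) atTop atTop := (tendsto_rpow_atTop hL).comp hWnorm
  have hdiff i V : DifferentiableAt ℝ (p i) V := (hp i).differentiable one_ne_zero V
  subst h𝓛
  rcases hℓ with rfl | rfl
  · obtain rfl : α = fun V => -log (∑ i, exp (-p i V)) := hα.trans <| funext fun V =>
      invFun_exp_neg (Finset.sum_pos (fun i _ => exp_pos _) Finset.univ_nonempty)
    exact tendsto_div_of_abs_sub_mul_le hnormL ha <| Eventually.of_forall fun t =>
      abs_inner_gradient_sub_mul_expMargin_le hL.le (fun i => hdiff i _) fun i c hc => hhom i c hc _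
  · obtain rfl : α = fun V => -log (exp (∑ i, log (1 + exp (-p i V))) - 1) :=
      hα.trans <| funext fun V => invFun_log_one_add_exp_neg (Finset.sum_pos
        (fun i _ => log_pos (by linarith [exp_pos (-p i V)])) Finset.univ_nonempty)
    refine tendsto_div_of_abs_sub_mul_le (C := L * (2 * Fintype.card (Fin n) + 1)) hnormL ha ?_
    filter_upwards [eventually_ge_atTop 0] with t ht
    refine abs_inner_gradient_sub_mul_logisticMargin_le hL.le (fun i => hdiff i _)
      (fun i c hc => hhom i c hc _) ?_
    simpa [one_add_one_eq_two] using hWloss t ht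
end
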